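/- arXiv:1610.00316 — 7 statements merged into one kernel-verified Lean document; each statement's English description precedes it below -/
import Mathlib

section
/- Let A be a symmetric N×N real matrix, fix i < j, and let A(x) be obtained from A by setting entries (i,j) and (j,i) equal to x. Then det(A(x)) is a quadratic polynomial in x of the form -a x² + b x + c, where the leading coefficient is a = A^{{i,j},{i,j}}, the cofactor in A of the 2×2 submatrix formed by rows i,j and columns i,j (i.e., (-1)^{(i+j)+(i+j)} times the determinant of A with rows i,j and columns i,j deleted). -/
open Matrix MeasureTheory Real

/-- The matrix `A` with the two symmetric entries at positions `(i,j)` and `(j,i)`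
replaced by `x`. -/
def updPair {N : ℕ} (A : Matrix (Fin N) (Fin N) ℝ) (i j : Fin N) (x : ℝ) :
    Matrix (Fin N) (Fin N) ℝ :=
  fun k l => if (k = i ∧ l = j) ∨ (k = j ∧ l = i) then x else A k l

/-- The `(i,j)`-cofactor of `M`: `(-1)^(i+j)` times the determinant of `M` with
row `i` and column `j` deleted. -/
noncomputable def cof {N : ℕ} (M : Matrix (Fin (N + 1)) (Fin (N + 1)) ℝ)
    (i j : Fin (N + 1)) : ℝ :=
  (-1 : ℝ) ^ ((i : ℕ) + (j : ℕ)) * (M.submatrix i.succAbove j.succAbove).det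

/-- The determinant of `M` with rows `i, i.succAbove j'` and columns
`i, i.succAbove j'` deleted (the cofactor of the 2×2 principal block). -/
noncomputable def minor2 {N : ℕ} (M : Matrix (Fin (N + 2)) (Fin (N + 2)) ℝ)
    (i : Fin (N + 2)) (j' : Fin (N + 1)) : ℝ :=
  (M.submatrix (i.succAbove ∘ j'.succAbove) (i.succAbove ∘ j'.succAbove)).det

lemma range_sa_comp {n : ℕ} (p : Fin (n+2)) (q : Fin (n+1)) :
    Set.range (p.succAbove ∘ q.succAbove) = ({p, p.succAbove q}ᶜ : Set (Fin (n+2))) := by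
  rw [Set.range_comp, Fin.range_succAbove]
  ext x
  simp only [Set.mem_image, Set.mem_compl_iff, Set.mem_singleton_iff, Set.mem_insert_iff, not_or]
  constructor
  · rintro ⟨y, hy, rfl⟩
    exact ⟨Fin.succAbove_ne _ _, fun h => hy (Fin.succAbove_right_injective h)⟩
  · rintro ⟨h1, h2⟩
    obtain ⟨y, rfl⟩ := Fin.exists_succAbove_eq h1
    exact ⟨y, fun h => h2 (by rw [h]), rfl⟩

lemma updRow_comm {m n α : Type*} [DecidableEq m] (M : Matrix m n α) {i j : m} (h : i ≠ j)
    (u v : n → α) : (M.updateRow i u).updateRow j v = (M.updateRow j v).updateRow i u := by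
  ext k l
  by_cases hk : k = j <;> by_cases hk' : k = i <;>
    simp [Matrix.updateRow_apply, hk, hk', h, Ne.symm h]

lemma det_aux {N : ℕ} (A : Matrix (Fin (N + 2)) (Fin (N + 2)) ℝ) (i : Fin (N + 2))
    (j' : Fin (N + 1)) (hij : i < i.succAbove j') :
    (Matrix.of fun k l => if k = i then Pi.single (i.succAbove j') (1:ℝ) l
      else if k = i.succAbove j' then Pi.single i 1 l else A k l).det = -(minor2 A i j') := by
  set j := i.succAbove j' with hjdef
  have hne : i ≠ j := ne_of_lt hij
  have hj : j = j'.succ :=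
    Fin.succAbove_of_le_castSucc _ _ ((Fin.lt_succAbove_iff_le_castSucc _ _).1 hij)
  have hjv : (j : ℕ) = (j' : ℕ) + 1 := by rw [hj]; simp
  have hiv : (i : ℕ) < N + 1 := by
    have := hij
    rw [Fin.lt_iff_val_lt_val, hjv] at this
    omega
  set i' : Fin (N+1) := ⟨(i : ℕ), hiv⟩ with hi'def
  have hci : Fin.castSucc i' = i := by ext; simp [hi'def]
  have hii' : j.succAbove i' = i := by
    rw [Fin.succAbove_of_castSucc_lt _ _ (by rw [hci]; exact hij), hci]
  set M : Matrix (Fin (N+2)) (Fin (N+2)) ℝ := Matrix.of fun k l =>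
    if k = i then (Pi.single j 1 : Fin (N+2) → ℝ) l
    else if k = j then (Pi.single i 1 : Fin (N+2) → ℝ) l else A k l with hM
  have hmap : j.succAbove ∘ i'.succAbove = i.succAbove ∘ j'.succAbove := by
    have hm1 : StrictMono (j.succAbove ∘ i'.succAbove) :=
      (Fin.strictMono_succAbove j).comp (Fin.strictMono_succAbove i')
    have hm2 : StrictMono (i.succAbove ∘ j'.succAbove) :=
      (Fin.strictMono_succAbove i).comp (Fin.strictMono_succAbove j')
    haveI : WellFoundedLT (Fin N) := inferInstance
    refine (hm1.range_inj hm2).1 ?_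
    rw [range_sa_comp, range_sa_comp, hii', ← hjdef, Set.pair_comm]
  rw [Matrix.det_succ_row M i, Finset.sum_eq_single j]
  · have hMij : M i j = 1 := by simp [hM]
    rw [hMij]
    rw [Matrix.det_succ_row _ j', Finset.sum_eq_single i']
    · have hE : (M.submatrix i.succAbove j.succAbove) j' i' = 1 := by
        simp [hM, Matrix.submatrix_apply, ← hjdef, hne, Ne.symm hne, hii', Pi.single_apply]
      rw [hE]
      have hF : ((M.submatrix i.succAbove j.succAbove).submatrix j'.succAbove i'.succAbove)
          = A.submatrix (i.succAbove ∘ j'.succAbove) (i.succAbove ∘ j'.succAbove) := by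
        ext k l
        have h1 : i.succAbove (j'.succAbove k) ≠ i := Fin.succAbove_ne _ _
        have h2 : i.succAbove (j'.succAbove k) ≠ j := by
          rw [hjdef]
          exact fun h => Fin.succAbove_ne j' k (Fin.succAbove_right_injective h)
        simp only [Matrix.submatrix_apply, hM, Matrix.of_apply, h1, h2, if_false,
          Function.comp_apply]
        rw [← Function.comp_apply (f := j.succAbove), hmap, Function.comp_apply]
      rw [hF]
      have hiv' : ((i' : Fin (N+1)) : ℕ) = (i : ℕ) := rfl
      have hsign : (-1:ℝ) ^ ((i:ℕ) + (j:ℕ)) * (-1:ℝ) ^ ((j':ℕ) + ((i' : Fin (N+1)):ℕ)) = -1 := by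
        rw [← pow_add, hiv', hjv]
        exact Odd.neg_one_pow ⟨(i:ℕ) + (j':ℕ), by ring⟩
      rw [mul_one, mul_one, ← mul_assoc, hsign, minor2]
      ring
    · intro l _ hl
      have : (M.submatrix i.succAbove j.succAbove) j' l = 0 := by
        have h3 : j.succAbove l ≠ i := by
          rw [← hii']; exact fun h => hl (Fin.succAbove_right_injective h)
        simp [hM, Matrix.submatrix_apply, ← hjdef, hne, Ne.symm hne, Pi.single_apply, h3]
      rw [this]; ring
    · intro h; exact absurd (Finset.mem_univ i') h
  · intro l _ hl
    have : M i l = 0 := by simp [hM, Pi.single_apply, hl]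
    rw [this]; ring
  · intro h; exact absurd (Finset.mem_univ j) h

/-- `det (A(x))` is a quadratic `-a x² + b x + c` in `x` whose leading
coefficient satisfies `a = A^{{i,j},{i,j}}`, the principal minor of `A` with rows and
columns `i, j` deleted (here `j = i.succAbove j'`). -/
theorem det_updPair_quadratic {N : ℕ} (A : Matrix (Fin (N + 2)) (Fin (N + 2)) ℝ)
    (hA : A.IsSymm) (i : Fin (N + 2)) (j' : Fin (N + 1))
    (hij : i < i.succAbove j') :
    ∃ b c : ℝ, ∀ x : ℝ,
      (updPair A i (i.succAbove j') x).det = -(minor2 A i j') * x ^ 2 + b * x + c := by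
  set j := i.succAbove j' with hjdef
  have hne : i ≠ j := ne_of_lt hij
  set B : Matrix (Fin (N+2)) (Fin (N+2)) ℝ := updPair A i j 0 with hB
  set Pj : Fin (N+2) → ℝ := Pi.single j 1 with hPj
  set Pi' : Fin (N+2) → ℝ := Pi.single i 1 with hPi'
  refine ⟨(B.updateRow i Pj).det + (B.updateRow j Pi').det, B.det, fun x => ?_⟩
  have key : updPair A i j x = (B.updateRow i (B i + x • Pj)).updateRow j (B j + x • Pi') := by
    ext k l
    by_cases hki : k = i <;> by_cases hkj : k = j <;>
      by_cases hli : l = i <;> by_cases hlj : l = j <;>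
      simp_all [B, Pj, Pi', hB, updPair, Matrix.updateRow_apply, Pi.single_apply, hne, Ne.symm hne]
  have h2 : (B.updateRow i (B i + x • Pj)).updateRow j (B j)
      = B.updateRow i (B i + x • Pj) := by
    conv_lhs => rw [show B j = (B.updateRow i (B i + x • Pj)) j from
      (Matrix.updateRow_ne (Ne.symm hne)).symm]
    rw [Matrix.updateRow_eq_self]
  have h1 : (updPair A i j x).det = (B.updateRow i (B i + x • Pj)).det
      + x * ((B.updateRow i (B i + x • Pj)).updateRow j Pi').det := by
    rw [key, Matrix.det_updateRow_add, Matrix.det_updateRow_smul, h2]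
  have h3 : (B.updateRow i (B i + x • Pj)).det = B.det + x * (B.updateRow i Pj).det := by
    rw [Matrix.det_updateRow_add, Matrix.det_updateRow_smul, Matrix.updateRow_eq_self]
  have h4 : (B.updateRow i (B i + x • Pj)).updateRow j Pi'
      = (B.updateRow j Pi').updateRow i (B i + x • Pj) := updRow_comm _ hne _ _
  have h5m : (B.updateRow j Pi').updateRow i (B i) = B.updateRow j Pi' := by
    conv_lhs => rw [show B i = (B.updateRow j Pi') i from (Matrix.updateRow_ne hne).symm]
    rw [Matrix.updateRow_eq_self]
  have h5 : ((B.updateRow j Pi').updateRow i (B i + x • Pj)).det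
      = (B.updateRow j Pi').det + x * ((B.updateRow j Pi').updateRow i Pj).det := by
    rw [Matrix.det_updateRow_add, Matrix.det_updateRow_smul, h5m]
  have hDeq : (B.updateRow j Pi').updateRow i Pj = Matrix.of fun k l =>
      if k = i then Pi.single j (1:ℝ) l else if k = j then Pi.single i 1 l else A k l := by
    ext k l
    by_cases hki : k = i <;> by_cases hkj : k = j <;>
      simp_all [B, Pj, Pi', hB, updPair, Matrix.updateRow_apply, Pi.single_apply, hne, Ne.symm hne]
  have hDdet : ((B.updateRow j Pi').updateRow i Pj).det = -(minor2 A i j') := by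
    rw [hDeq]
    exact det_aux A i j' hij
  rw [h1, h3, h4, h5, hDdet]
  ring
end

section
/- (Sylvester determinant identity for a 2×2 block) For a symmetric N×N real matrix S and indices i < j, it holds that S^{{i,j},{i,j}} · det(S) = S^{i,i} S^{j,j} - (S^{i,j})², where S^{k,l} denotes the (k,l)-cofactor of S and S^{{i,j},{i,j}} is the cofactor obtained by deleting rows i,j and columns i,j. -/
open Matrix MeasureTheory Real

variable {n : Type*} [Fintype n] [DecidableEq n]

/-- key multiplicative identity -/
lemma key_mul (B : Matrix (n ⊕ Fin 2) (n ⊕ Fin 2) ℝ) :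
    B * (fromBlocks 1 ((adjugate B).toBlocks₁₂) 0 ((adjugate B).toBlocks₂₂)) =
      fromBlocks (B.toBlocks₁₁) 0 (B.toBlocks₂₁) (B.det • 1) := by
  ext x y
  rcases y with l | b
  · rcases x with k | a <;>
    · simp [mul_apply, Fintype.sum_sum_type, fromBlocks, toBlocks₁₁, toBlocks₂₁,
        one_apply, mul_ite]
  · have h := congrFun (congrFun (mul_adjugate B) x) (Sum.inr b)
    rcases x with k | a <;>
    · simp only [mul_apply, Fintype.sum_sum_type, fromBlocks, toBlocks₁₂, toBlocks₂₂,
        Sum.elim_inl, Sum.elim_inr, of_apply] at h ⊢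
      simpa [Matrix.one_apply] using h

lemma block_jacobi_aux (B : Matrix (n ⊕ Fin 2) (n ⊕ Fin 2) ℝ) :
    B.det * ((adjugate B).toBlocks₂₂).det = (B.toBlocks₁₁).det * B.det ^ 2 := by
  have h := congrArg det (key_mul B)
  rw [det_mul, det_fromBlocks_zero₂₁, det_fromBlocks_zero₁₂, det_one, one_mul,
    det_smul, det_one, mul_one] at h
  simpa [Fintype.card_fin] using h

lemma eval_det_add_smul_one (B : Matrix (n ⊕ Fin 2) (n ⊕ Fin 2) ℝ) (t : ℝ) :
    ((-B).charpoly).eval t = (B + t • 1).det := by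
  rw [Matrix.charpoly, ← Polynomial.coe_evalRingHom, RingHom.map_det]
  congr 1
  ext k l
  by_cases h : k = l
  · subst h
    simp [RingHom.mapMatrix_apply, Matrix.map_apply, charmatrix_apply_eq,
      Polynomial.coe_evalRingHom, Matrix.one_apply_eq]
    ring
  · simp [RingHom.mapMatrix_apply, Matrix.map_apply, charmatrix_apply_ne _ _ _ h,
      Matrix.one_apply_ne h]

lemma block_jacobi (B : Matrix (n ⊕ Fin 2) (n ⊕ Fin 2) ℝ) :
    (B.toBlocks₁₁).det * B.det = ((adjugate B).toBlocks₂₂).det := by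
  have hinv : ∀ C : Matrix (n ⊕ Fin 2) (n ⊕ Fin 2) ℝ, C.det ≠ 0 →
      (C.toBlocks₁₁).det * C.det = ((adjugate C).toBlocks₂₂).det := by
    intro C hC
    have h := block_jacobi_aux C
    apply mul_left_cancel₀ hC
    rw [h]; ring
  -- continuity argument
  set f : ℝ → ℝ := fun t => ((B + t • 1).toBlocks₁₁).det * (B + t • 1).det with hf
  set g : ℝ → ℝ := fun t => ((adjugate (B + t • 1)).toBlocks₂₂).det with hg
  have hBt : Continuous fun t : ℝ => B + t • (1 : Matrix (n ⊕ Fin 2) (n ⊕ Fin 2) ℝ) := by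
    apply continuous_const.add
    exact continuous_pi fun i => continuous_pi fun j =>
      (continuous_id.smul continuous_const : Continuous fun t : ℝ => t • ((1 : Matrix _ _ ℝ) i j))
  have hcf : Continuous f := by
    apply Continuous.mul
    · exact ((hBt.matrix_submatrix Sum.inl Sum.inl).matrix_det)
    · exact hBt.matrix_det
  have hcg : Continuous g := by
    exact ((hBt.matrix_adjugate.matrix_submatrix Sum.inr Sum.inr).matrix_det)
  have hdense : Dense {t : ℝ | (B + t • 1).det ≠ 0} := by
    have hfin : ({t : ℝ | (B + t • 1).det = 0}).Finite := by
      have hne : (-B).charpoly ≠ 0 := (Matrix.charpoly_monic _).ne_zero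
      have := Polynomial.finite_setOf_isRoot hne
      refine this.subset ?_
      intro t ht
      simp only [Set.mem_setOf_eq] at ht ⊢
      rw [Polynomial.IsRoot, eval_det_add_smul_one, ht]
    exact (hfin.countable).dense_compl ℝ
  have heq : f = g := by
    exact Continuous.ext_on hdense hcf hcg fun t ht => hinv _ ht
  have h0 := congrFun heq 0
  simpa [hf, hg] using h0
/-- Sylvester determinant identity for a 2×2 block:
`S^{{i,j},{i,j}} · det S = S^{i,i} S^{j,j} - (S^{i,j})²` (here `j = i.succAbove j'`). -/
theorem sylvester_block_identity {N : ℕ} (S : Matrix (Fin (N + 2)) (Fin (N + 2)) ℝ)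
    (hS : S.IsSymm) (i : Fin (N + 2)) (j' : Fin (N + 1))
    (hij : i < i.succAbove j') :
    minor2 S i j' * S.det =
      cof S i i * cof S (i.succAbove j') (i.succAbove j')
        - (cof S i (i.succAbove j')) ^ 2 := by
  classical
  set j : Fin (N + 2) := i.succAbove j' with hj
  set g : Fin N ⊕ Fin 2 → Fin (N + 2) :=
    Sum.elim (i.succAbove ∘ j'.succAbove) ![i, j] with hgdef
  have hne_i : ∀ k, i.succAbove (j'.succAbove k) ≠ i := fun k => Fin.succAbove_ne i _
  have hne_j : ∀ k, i.succAbove (j'.succAbove k) ≠ j := by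
    intro k h
    exact Fin.succAbove_ne j' k (Fin.succAbove_right_injective h)
  have hij' : i ≠ j := (Fin.succAbove_ne i j').symm
  have hginj : Function.Injective g := by
    intro x y hxy
    rcases x with k | a <;> rcases y with l | b
    · simp only [hgdef, Sum.elim_inl, Function.comp_apply] at hxy
      exact congrArg Sum.inl
        (Fin.succAbove_right_injective (Fin.succAbove_right_injective hxy))
    · exfalso
      fin_cases b <;>
        simp only [hgdef, Sum.elim_inl, Sum.elim_inr, Function.comp_apply,
          Matrix.cons_val_zero, Matrix.cons_val_one, Matrix.head_cons] at hxy
      · exact hne_i k hxy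
      · exact hne_j k hxy
    · exfalso
      fin_cases a <;>
        simp only [hgdef, Sum.elim_inl, Sum.elim_inr, Function.comp_apply,
          Matrix.cons_val_zero, Matrix.cons_val_one, Matrix.head_cons] at hxy
      · exact hne_i l hxy.symm
      · exact hne_j l hxy.symm
    · congr 1
      fin_cases a <;> fin_cases b <;>
        simp only [hgdef, Sum.elim_inr, Matrix.cons_val_zero, Matrix.cons_val_one,
          Matrix.head_cons] at hxy ⊢ <;> first | rfl | exact absurd hxy hij' |
          exact absurd hxy.symm hij'
  have hgbij : Function.Bijective g :=
    (Fintype.bijective_iff_injective_and_card g).mpr ⟨hginj, by simp⟩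
  set e : (Fin N ⊕ Fin 2) ≃ Fin (N + 2) := Equiv.ofBijective g hgbij with he
  have hecoe : ∀ x, e x = g x := fun _ => rfl
  set B : Matrix (Fin N ⊕ Fin 2) (Fin N ⊕ Fin 2) ℝ := S.submatrix e e with hB
  have hdet : B.det = S.det := det_submatrix_equiv_self e S
  have hadj : adjugate B = (adjugate S).submatrix e e := adjugate_submatrix_equiv_self e S
  have h11 : B.toBlocks₁₁ =
      S.submatrix (i.succAbove ∘ j'.succAbove) (i.succAbove ∘ j'.succAbove) := by
    ext k l; rfl
  have hkey := block_jacobi B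
  rw [h11, hdet] at hkey
  have hcof : ∀ a b : Fin (N + 2), cof S a b = adjugate S b a := by
    intro a b
    rw [cof, adjugate_fin_succ_eq_det_submatrix]
  have hsymm : adjugate S i j = adjugate S j i := by
    have h1 : (adjugate S)ᵀ = adjugate S := by
      rw [adjugate_transpose, hS.eq]
    exact (congrFun (congrFun h1 i) j).symm
  have h22 : ((adjugate B).toBlocks₂₂).det =
      adjugate S i i * adjugate S j j - adjugate S i j * adjugate S j i := by
    rw [det_fin_two]
    have h0 : e (Sum.inr 0) = i := rfl
    have h1 : e (Sum.inr 1) = j := rfl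
    simp only [toBlocks₂₂, hadj, of_apply, submatrix_apply, h0, h1]
  rw [minor2, hkey, h22, hcof, hcof, hcof, hsymm]
  ring
end

section
/- Let S be a symmetric N×N real matrix, and let S(x) denote the matrix obtained from S by replacing the pair of entries (i,j),(j,i) by x. Suppose all principal minors of S(x) not involving the variable x are positive. Then det(S(x)) = -a x² + b x + c with a > 0, and S(x) is positive definite if and only if x lies strictly between the two real roots x₁ < x₂ of -a x² + b x + c = 0. -/
open Matrix MeasureTheory Real

section AuxLemmas

variable {m n : Type*}

lemma sum_extend_mul [Fintype m] [Fintype n] [DecidableEq n]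
    (f : m → n) (hf : Function.Injective f) (x : m → ℝ) (g : n → ℝ) :
    ∑ v, Function.extend f x 0 v * g v = ∑ k, x k * g (f k) := by
  classical
  have h1 : ∑ v ∈ Finset.univ.image f, (Function.extend f x 0 v * g v)
      = ∑ k, Function.extend f x 0 (f k) * g (f k) :=
    Finset.sum_image (fun a _ b _ h => hf h)
  have h2 : ∑ v, Function.extend f x 0 v * g v
      = ∑ v ∈ Finset.univ.image f, (Function.extend f x 0 v * g v) := by
    refine (Finset.sum_subset (Finset.subset_univ _) ?_).symm
    intro v _ hv
    have : ¬ ∃ a, f a = v := by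
      rintro ⟨a, ha⟩; exact hv (Finset.mem_image.mpr ⟨a, Finset.mem_univ a, ha⟩)
    simp [Function.extend_apply' _ _ _ this]
  rw [h2, h1]
  congr 1; ext k; rw [hf.extend_apply]

lemma posDef_submatrix_inj [Fintype m] [Fintype n] [DecidableEq m] [DecidableEq n]
    {M : Matrix n n ℝ} (hM : M.PosDef) (f : m → n) (hf : Function.Injective f) :
    (M.submatrix f f).PosDef := by
  refine posDef_iff_dotProduct_mulVec.mpr ⟨hM.1.submatrix f, fun x hx => ?_⟩
  set y := Function.extend f x 0 with hy
  have hyf : ∀ k, y (f k) = x k := fun k => hf.extend_apply x 0 k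
  have hy0 : y ≠ 0 := by
    obtain ⟨k, hk⟩ := Function.ne_iff.mp hx
    exact Function.ne_iff.mpr ⟨f k, by simpa [hyf k] using hk⟩
  have hMy : ∀ k, (∑ w, M (f k) w * y w) = ∑ l, M (f k) (f l) * x l := by
    intro k
    have h1 : ∑ w, M (f k) w * y w = ∑ w, y w * M (f k) w :=
      Finset.sum_congr rfl fun w _ => mul_comm _ _
    rw [h1, sum_extend_mul f hf x (fun w => M (f k) w)]
    exact Finset.sum_congr rfl fun l _ => mul_comm _ _
  have key : dotProduct (star x) ((M.submatrix f f) *ᵥ x) = dotProduct (star y) (M *ᵥ y) := by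
    have lhs : dotProduct (star x) ((M.submatrix f f) *ᵥ x)
        = ∑ k, x k * ∑ l, M (f k) (f l) * x l := by
      simp [dotProduct, Matrix.mulVec, Matrix.submatrix_apply]
    have rhs : dotProduct (star y) (M *ᵥ y) = ∑ v, y v * ∑ w, M v w * y w := by
      simp [dotProduct, Matrix.mulVec]
    rw [lhs, rhs, sum_extend_mul f hf x (fun v => ∑ w, M v w * y w)]
    exact Finset.sum_congr rfl fun k _ => by rw [hMy k]
  rw [key]
  exact hM.dotProduct_mulVec_pos hy0

lemma posDef_submatrix_bij [Fintype m] [Fintype n] [DecidableEq m] [DecidableEq n]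
    {M : Matrix n n ℝ} {f : m → n} (hf : Function.Bijective f) :
    (M.submatrix f f).PosDef ↔ M.PosDef := by
  constructor
  · intro h
    have hg : ∀ y, f (Function.surjInv hf.2 y) = y := fun y => Function.surjInv_eq hf.2 y
    have hMeq : M = (M.submatrix f f).submatrix (Function.surjInv hf.2)
        (Function.surjInv hf.2) := by
      ext a b; simp [Matrix.submatrix_apply, hg]
    rw [hMeq]
    exact posDef_submatrix_inj h _ (Function.injective_surjInv hf.2)
  · intro h
    exact posDef_submatrix_inj h f hf.1

lemma posDef_unit_iff (M : Matrix Unit Unit ℝ) : M.PosDef ↔ 0 < M () () := by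
  constructor
  · intro h
    have := h.dotProduct_mulVec_pos (x := fun _ => 1) (by intro h0; simpa using congrFun h0 ())
    simpa [dotProduct, Matrix.mulVec] using this
  · intro h
    refine posDef_iff_dotProduct_mulVec.mpr ⟨?_, ?_⟩
    · ext a b
      cases a; cases b
      simp [Matrix.conjTranspose_apply]
    · intro x hx
      have hx0 : x () ≠ 0 := fun h0 => hx (funext fun u => by cases u; exact h0)
      have hval : dotProduct (star x) (M *ᵥ x) = M () () * (x () * x ()) := by
        simp [dotProduct, Matrix.mulVec]; ring
      rw [hval]
      exact mul_pos h (mul_self_pos.mpr hx0)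

lemma posDef_fromBlocks₁₁' [Fintype m] [DecidableEq m] [Fintype n] [DecidableEq n]
    {A : Matrix m m ℝ} (B : Matrix m n ℝ) (D : Matrix n n ℝ) (hA : A.PosDef) [Invertible A] :
    (Matrix.fromBlocks A B Bᴴ D).PosDef ↔ (D - Bᴴ * A⁻¹ * B).PosDef := by
  constructor
  · intro h; obtain ⟨h1, h2⟩ := posDef_iff_dotProduct_mulVec.mp h
    refine posDef_iff_dotProduct_mulVec.mpr ⟨(Matrix.IsHermitian.fromBlocks₁₁ _ _ hA.1).mp h1, fun x hx => ?_⟩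
    have hz : (-((A⁻¹ * B) *ᵥ x) ⊕ᵥ x) ≠ 0 := by
      intro h0
      apply hx
      ext k
      exact congrFun h0 (Sum.inr k)
    have := h2 hz
    rw [dotProduct_mulVec, Matrix.schur_complement_eq₁₁ B D _ _ hA.1, neg_add_cancel,
      dotProduct_zero, zero_add] at this
    rw [dotProduct_mulVec]
    exact this
  · intro h; obtain ⟨h1, h2⟩ := posDef_iff_dotProduct_mulVec.mp h
    refine posDef_iff_dotProduct_mulVec.mpr ⟨(Matrix.IsHermitian.fromBlocks₁₁ _ _ hA.1).mpr h1, fun z hz => ?_⟩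
    rw [dotProduct_mulVec, ← Sum.elim_comp_inl_inr z,
      Matrix.schur_complement_eq₁₁ B D _ _ hA.1]
    by_cases hzr : z ∘ Sum.inr = 0
    · have hzl : z ∘ Sum.inl ≠ 0 := by
        intro h0
        apply hz
        ext s
        cases s with
        | inl k => exact congrFun h0 k
        | inr k => exact congrFun hzr k
      rw [hzr]
      simp only [Matrix.mulVec_zero, add_zero, star_zero, Matrix.zero_vecMul,
        Matrix.vecMul_zero, dotProduct_zero, zero_dotProduct]
      rw [← dotProduct_mulVec]
      exact hA.dotProduct_mulVec_pos hzl
    · refine add_pos_of_nonneg_of_pos ?_ ?_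
      · rw [← dotProduct_mulVec]
        exact hA.posSemidef.dotProduct_mulVec_nonneg _
      · rw [← dotProduct_mulVec]
        exact h2 hzr

/-- constant 1×1 matrix -/
def cmat (r : ℝ) : Matrix Unit Unit ℝ := Matrix.of fun _ _ => r

lemma cmat_herm (r : ℝ) : (cmat r)ᴴ = cmat r := by
  ext a b; simp [cmat, Matrix.conjTranspose_apply]

lemma cmat_inv (r : ℝ) : (cmat r)⁻¹ = cmat r⁻¹ := by
  ext a b
  rw [Matrix.inv_def, Matrix.adjugate_subsingleton, Matrix.det_unique]
  simp [cmat]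

/-- symmetric 2×2 matrix over `Unit ⊕ Unit` -/
def two (p t t' q : ℝ) : Matrix (Unit ⊕ Unit) (Unit ⊕ Unit) ℝ :=
  Matrix.fromBlocks (cmat p) (cmat t) (cmat t') (cmat q)

lemma schur_entry (p t q : ℝ) :
    (cmat q - (cmat t)ᴴ * (cmat p)⁻¹ * cmat t) () () = q - t * p⁻¹ * t := by
  rw [cmat_inv]
  simp [cmat, Matrix.sub_apply, Matrix.mul_apply, Matrix.conjTranspose_apply]

lemma two_posDef_iff {p q : ℝ} (t : ℝ) (hp : 0 < p) :
    (two p t t q).PosDef ↔ t ^ 2 < p * q := by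
  haveI : Invertible (cmat p) :=
    (cmat p).invertibleOfIsUnitDet
      (isUnit_iff_ne_zero.2 (by rw [Matrix.det_unique]; exact hp.ne'))
  have hPD : (cmat p).PosDef := (posDef_unit_iff _).mpr hp
  rw [show two p t t q = Matrix.fromBlocks (cmat p) (cmat t) (cmat t)ᴴ (cmat q) from by
    rw [cmat_herm]; rfl]
  rw [posDef_fromBlocks₁₁' _ _ hPD, posDef_unit_iff, schur_entry]
  have hp' : p ≠ 0 := hp.ne'
  constructor
  · intro h
    have heq : q - t * p⁻¹ * t = (p * q - t ^ 2) / p := by field_simp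
    rw [heq] at h
    have := mul_pos h hp
    rw [div_mul_cancel₀ _ hp'] at this
    linarith
  · intro h
    have heq : q - t * p⁻¹ * t = (p * q - t ^ 2) / p := by field_simp
    rw [heq]
    exact div_pos (by linarith) hp

lemma two_det {p : ℝ} (t t' q : ℝ) (hp : p ≠ 0) :
    (two p t t' q).det = p * q - t * t' := by
  haveI : Invertible (cmat p) :=
    (cmat p).invertibleOfIsUnitDet
      (isUnit_iff_ne_zero.2 (by rw [Matrix.det_unique]; exact hp))
  rw [two, Matrix.det_fromBlocks₁₁, Matrix.invOf_eq_nonsing_inv, Matrix.det_unique,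
    Matrix.det_unique, cmat_inv]
  simp only [cmat, Matrix.sub_apply, Matrix.mul_apply, Matrix.of_apply,
    Finset.univ_unique, Finset.sum_singleton]
  field_simp

lemma val_succAbove {k : ℕ} (p : Fin (k + 1)) (c : Fin k) :
    ((p.succAbove c : Fin (k + 1)) : ℕ) = if (c : ℕ) < (p : ℕ) then (c : ℕ) else (c : ℕ) + 1 := by
  rcases lt_or_ge (Fin.castSucc c) p with h | h
  · rw [Fin.succAbove_of_castSucc_lt _ _ h, if_pos]
    · simp
    · simpa [Fin.lt_def] using h
  · rw [Fin.succAbove_of_le_castSucc _ _ h, if_neg]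
    · simp
    · simpa [Fin.le_def, not_lt] using h

end AuxLemmas

/-- if the principal submatrices of `S` obtained by deleting row/column `i`
(resp. `j`) are positive definite, then `det (S(x)) = -a x² + b x + c` with `a > 0`, and
`S(x)` is positive definite iff `x` lies strictly between the two roots `x₁ < x₂`. -/
theorem posDef_updPair_iff_between_roots {N : ℕ}
    (S : Matrix (Fin (N + 2)) (Fin (N + 2)) ℝ) (hS : S.IsSymm)
    (i j : Fin (N + 2)) (hij : i < j)
    (hi : (S.submatrix i.succAbove i.succAbove).PosDef)
    (hj : (S.submatrix j.succAbove j.succAbove).PosDef) :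
    ∃ a b c x₁ x₂ : ℝ, 0 < a ∧ x₁ < x₂ ∧
      (∀ x : ℝ, (updPair S i j x).det = -a * x ^ 2 + b * x + c) ∧
      -a * x₁ ^ 2 + b * x₁ + c = 0 ∧ -a * x₂ ^ 2 + b * x₂ + c = 0 ∧
      (∀ x : ℝ, (updPair S i j x).PosDef ↔ (x₁ < x ∧ x < x₂)) := by
  classical
  have hne : i ≠ j := Fin.ne_of_lt hij
  have hij' : (i : ℕ) < (j : ℕ) := hij
  have hjN : (j : ℕ) < N + 2 := j.isLt
  obtain ⟨i₁, hi₁⟩ : ∃ i₁ : Fin (N + 1), (i₁ : ℕ) = (i : ℕ) := ⟨⟨(i : ℕ), by omega⟩, rfl⟩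
  obtain ⟨j₁, hj₁⟩ : ∃ j₁ : Fin (N + 1), (j₁ : ℕ) = (j : ℕ) - 1 := ⟨⟨(j : ℕ) - 1, by omega⟩, rfl⟩
  have hsi : j.succAbove i₁ = i := by
    apply Fin.ext
    rw [val_succAbove, hi₁]
    split_ifs <;> omega
  have hsj : i.succAbove j₁ = j := by
    apply Fin.ext
    rw [val_succAbove, hj₁]
    split_ifs <;> omega
  set c : Fin N → Fin (N + 2) := j.succAbove ∘ i₁.succAbove with hc_def
  have hc : ∀ k, i.succAbove (j₁.succAbove k) = c k := by
    intro k
    apply Fin.ext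
    show _ = ((j.succAbove (i₁.succAbove k) : Fin (N + 2)) : ℕ)
    rw [val_succAbove, val_succAbove, val_succAbove, val_succAbove, hi₁, hj₁]
    split_ifs <;> omega
  have hcinj : Function.Injective c :=
    Fin.succAbove_right_injective.comp Fin.succAbove_right_injective
  have hci : ∀ k, c k ≠ i := by
    intro k h
    exact Fin.succAbove_ne i₁ k (Fin.succAbove_right_injective (h.trans hsi.symm))
  have hcj : ∀ k, c k ≠ j := fun k => Fin.succAbove_ne j _
  -- the global reindexing map
  set F : Fin N ⊕ (Unit ⊕ Unit) → Fin (N + 2) :=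
    Sum.elim c (Sum.elim (fun _ => i) (fun _ => j)) with hF_def
  have hFinj : Function.Injective F := by
    rintro (a | a | a) (b | b | b) h
    · exact congrArg Sum.inl (hcinj h)
    · exact absurd h (hci a)
    · exact absurd h (hcj a)
    · exact absurd h.symm (hci b)
    · rfl
    · exact absurd h hne
    · exact absurd h.symm (hcj b)
    · exact absurd h hne.symm
    · rfl
  have hFbij : Function.Bijective F := by
    rw [Fintype.bijective_iff_injective_and_card]
    exact ⟨hFinj, by simp⟩
  -- the blocks
  set A : Matrix (Fin N) (Fin N) ℝ := Matrix.of fun k l => S (c k) (c l) with hA_def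
  set W : Matrix (Fin N) (Unit ⊕ Unit) ℝ :=
    Matrix.of fun k s => Sum.elim (fun _ => S (c k) i) (fun _ => S (c k) j) s with hW_def
  have hA : A.PosDef := by
    have hAeq : A = (S.submatrix j.succAbove j.succAbove).submatrix
        i₁.succAbove i₁.succAbove := by
      ext k l; rfl
    rw [hAeq]
    exact posDef_submatrix_inj hj _ Fin.succAbove_right_injective
  haveI : Invertible A := A.invertibleOfIsUnitDet (isUnit_iff_ne_zero.2 hA.det_pos.ne')
  have hAsym : Aᵀ = A := by
    ext k l
    exact hS.apply (c k) (c l)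
  have hAinv : (A⁻¹)ᵀ = A⁻¹ := by rw [Matrix.transpose_nonsing_inv, hAsym]
  have hWH : Wᴴ = Wᵀ := by
    ext s k; simp [Matrix.conjTranspose_apply]
  -- block decomposition of updPair
  have hBlock : ∀ x, (updPair S i j x).submatrix F F
      = Matrix.fromBlocks A W Wᴴ (two (S i i) x x (S j j)) := by
    intro x
    ext s t
    rcases s with k | s | s <;> rcases t with l | t | t
    · show (if (c k = i ∧ c l = j) ∨ (c k = j ∧ c l = i) then x else S (c k) (c l)) = A k l
      rw [if_neg]
      · rfl
      · rintro (⟨h1, _⟩ | ⟨h1, _⟩)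
        exacts [hci k h1, hcj k h1]
    · show (if (c k = i ∧ i = j) ∨ (c k = j ∧ i = i) then x else S (c k) i) = W k (Sum.inl t)
      rw [if_neg]
      · rfl
      · rintro (⟨h1, _⟩ | ⟨h1, _⟩)
        exacts [hci k h1, hcj k h1]
    · show (if (c k = i ∧ j = j) ∨ (c k = j ∧ j = i) then x else S (c k) j) = W k (Sum.inr t)
      rw [if_neg]
      · rfl
      · rintro (⟨h1, _⟩ | ⟨h1, _⟩)
        exacts [hci k h1, hcj k h1]
    · show (if (i = i ∧ c l = j) ∨ (i = j ∧ c l = i) then x else S i (c l))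
        = star (W l (Sum.inl s))
      rw [if_neg, star_trivial]
      · exact (hS.apply i (c l)).symm
      · rintro (⟨_, h2⟩ | ⟨h1, _⟩)
        exacts [hcj l h2, hne h1]
    · show (if (i = i ∧ i = j) ∨ (i = j ∧ i = i) then x else S i i) = S i i
      rw [if_neg]
      rintro (⟨_, h⟩ | ⟨h, _⟩) <;> exact hne h
    · show (if (i = i ∧ j = j) ∨ (i = j ∧ j = i) then x else S i j) = x
      rw [if_pos (Or.inl ⟨rfl, rfl⟩)]
    · show (if (j = i ∧ c l = j) ∨ (j = j ∧ c l = i) then x else S j (c l))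
        = star (W l (Sum.inr s))
      rw [if_neg, star_trivial]
      · exact (hS.apply j (c l)).symm
      · rintro (⟨h1, _⟩ | ⟨_, h2⟩)
        exacts [hne h1.symm, hci l h2]
    · show (if (j = i ∧ i = j) ∨ (j = j ∧ i = i) then x else S j i) = x
      rw [if_pos (Or.inr ⟨rfl, rfl⟩)]
    · show (if (j = i ∧ j = j) ∨ (j = j ∧ j = i) then x else S j j) = S j j
      rw [if_neg]
      rintro (⟨h, _⟩ | ⟨_, h⟩) <;> exact hne h.symm
  -- Schur complement data
  set M : Matrix (Unit ⊕ Unit) (Unit ⊕ Unit) ℝ := Wᴴ * A⁻¹ * W with hM_def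
  have hMT : Mᵀ = M := by
    rw [hM_def, hWH]
    rw [Matrix.transpose_mul, Matrix.transpose_mul, Matrix.transpose_transpose, hAinv,
      Matrix.mul_assoc]
  have hMsym : M (Sum.inr ()) (Sum.inl ()) = M (Sum.inl ()) (Sum.inr ()) :=
    congrFun (congrFun hMT (Sum.inl ())) (Sum.inr ())
  set p : ℝ := S i i - M (Sum.inl ()) (Sum.inl ()) with hp_def
  set q : ℝ := S j j - M (Sum.inr ()) (Sum.inr ()) with hq_def
  set m01 : ℝ := M (Sum.inl ()) (Sum.inr ()) with hm01_def
  have hE : ∀ x : ℝ, two (S i i) x x (S j j) - M = two p (x - m01) (x - m01) q := by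
    intro x
    ext s t
    rcases s with ⟨⟩ | ⟨⟩ <;> rcases t with ⟨⟩ | ⟨⟩
    · rfl
    · rfl
    · show _ - M (Sum.inr ()) (Sum.inl ()) = x - m01
      rw [hMsym]; rfl
    · rfl
  -- p > 0 from hj
  have hp : 0 < p := by
    set u : Matrix (Fin N) Unit ℝ := Matrix.of fun k _ => S (c k) i with hu_def
    set G : Fin N ⊕ Unit → Fin (N + 1) :=
      Sum.elim (fun k => i₁.succAbove k) (fun _ => i₁) with hG_def
    have hGinj : Function.Injective G := by
      rintro (a | a) (b | b) h
      · exact congrArg Sum.inl (Fin.succAbove_right_injective h)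
      · exact absurd h (Fin.succAbove_ne i₁ a)
      · exact absurd h.symm (Fin.succAbove_ne i₁ b)
      · rfl
    have hjB : (S.submatrix j.succAbove j.succAbove).submatrix G G
        = Matrix.fromBlocks A u uᴴ (cmat (S i i)) := by
      ext s t
      rcases s with k | s <;> rcases t with l | t
      · rfl
      · show S (j.succAbove (i₁.succAbove k)) (j.succAbove i₁) = u k t
        rw [hsi]; rfl
      · show S (j.succAbove i₁) (j.succAbove (i₁.succAbove l)) = star (u l s)
        rw [hsi, star_trivial]
        exact (hS.apply i (c l)).symm
      · show S (j.succAbove i₁) (j.succAbove i₁) = S i i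
        rw [hsi]
    have hjPD : (Matrix.fromBlocks A u uᴴ (cmat (S i i))).PosDef := by
      rw [← hjB]
      exact posDef_submatrix_inj hj G hGinj
    have hSch : (cmat (S i i) - uᴴ * A⁻¹ * u).PosDef :=
      (posDef_fromBlocks₁₁' u _ hA).mp hjPD
    have h0 := (posDef_unit_iff _).mp hSch
    have hent : (uᴴ * A⁻¹ * u) () () = M (Sum.inl ()) (Sum.inl ()) := rfl
    have : (cmat (S i i) - uᴴ * A⁻¹ * u) () ()
        = S i i - M (Sum.inl ()) (Sum.inl ()) := by
      rw [← hent]; rfl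
    rw [this] at h0
    exact h0
  -- q > 0 from hi
  have hq : 0 < q := by
    set v : Matrix (Fin N) Unit ℝ := Matrix.of fun k _ => S (c k) j with hv_def
    set G : Fin N ⊕ Unit → Fin (N + 1) :=
      Sum.elim (fun k => j₁.succAbove k) (fun _ => j₁) with hG_def
    have hGinj : Function.Injective G := by
      rintro (a | a) (b | b) h
      · exact congrArg Sum.inl (Fin.succAbove_right_injective h)
      · exact absurd h (Fin.succAbove_ne j₁ a)
      · exact absurd h.symm (Fin.succAbove_ne j₁ b)
      · rfl
    have hiB : (S.submatrix i.succAbove i.succAbove).submatrix G G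
        = Matrix.fromBlocks A v vᴴ (cmat (S j j)) := by
      ext s t
      rcases s with k | s <;> rcases t with l | t
      · show S (i.succAbove (j₁.succAbove k)) (i.succAbove (j₁.succAbove l)) = A k l
        rw [hc k, hc l]; rfl
      · show S (i.succAbove (j₁.succAbove k)) (i.succAbove j₁) = v k t
        rw [hc k, hsj]; rfl
      · show S (i.succAbove j₁) (i.succAbove (j₁.succAbove l)) = star (v l s)
        rw [hc l, hsj, star_trivial]
        exact (hS.apply j (c l)).symm
      · show S (i.succAbove j₁) (i.succAbove j₁) = S j j
        rw [hsj]
    have hiPD : (Matrix.fromBlocks A v vᴴ (cmat (S j j))).PosDef := by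
      rw [← hiB]
      exact posDef_submatrix_inj hi G hGinj
    have hSch : (cmat (S j j) - vᴴ * A⁻¹ * v).PosDef :=
      (posDef_fromBlocks₁₁' v _ hA).mp hiPD
    have h0 := (posDef_unit_iff _).mp hSch
    have hent : (vᴴ * A⁻¹ * v) () () = M (Sum.inr ()) (Sum.inr ()) := rfl
    have : (cmat (S j j) - vᴴ * A⁻¹ * v) () ()
        = S j j - M (Sum.inr ()) (Sum.inr ()) := by
      rw [← hent]; rfl
    rw [this] at h0
    exact h0
  have hpq : 0 < p * q := mul_pos hp hq
  -- positive-definiteness characterization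
  have hPD : ∀ x : ℝ, (updPair S i j x).PosDef ↔ (x - m01) ^ 2 < p * q := by
    intro x
    rw [← posDef_submatrix_bij (M := updPair S i j x) hFbij, hBlock x,
      posDef_fromBlocks₁₁' W _ hA, hE x]
    exact two_posDef_iff _ hp
  -- determinant formula
  have hDet : ∀ x : ℝ, (updPair S i j x).det = A.det * (p * q - (x - m01) ^ 2) := by
    intro x
    have hcoe : ⇑(Equiv.ofBijective F hFbij) = F := rfl
    have hdet := Matrix.det_submatrix_equiv_self (Equiv.ofBijective F hFbij) (updPair S i j x)
    rw [hcoe, hBlock x, Matrix.det_fromBlocks₁₁, Matrix.invOf_eq_nonsing_inv] at hdet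
    rw [← hdet, hE x, two_det _ _ _ hp.ne']
    ring
  -- assemble the answer
  set s : ℝ := Real.sqrt (p * q) with hs_def
  have hs2 : s ^ 2 = p * q := Real.sq_sqrt hpq.le
  have hspos : 0 < s := Real.sqrt_pos.mpr hpq
  have ha : 0 < A.det := hA.det_pos
  refine ⟨A.det, 2 * A.det * m01, A.det * (p * q - m01 ^ 2), m01 - s, m01 + s,
    ha, by linarith, ?_, ?_, ?_, ?_⟩
  · intro x
    rw [hDet x]
    ring
  · linear_combination (-A.det) * hs2
  · linear_combination (-A.det) * hs2
  · intro x
    rw [hPD x]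
    constructor
    · intro h
      constructor <;> nlinarith [hs2, hspos]
    · rintro ⟨h1, h2⟩
      nlinarith [hs2, hspos, mul_pos (by linarith : (0:ℝ) < x - (m01 - s))
        (by linarith : (0:ℝ) < m01 + s - x)]
end

section
/- Let S be a symmetric positive definite N×N real matrix, i < j, and let det(S(x)) = -a x² + b x + c as a function of the common value x placed at entries (i,j) and (j,i). Then the discriminant satisfies b² + 4ac > 0, so the quadratic has two distinct real roots x₁ < x₂, and the actual entry s_{i,j} satisfies x₁ < s_{i,j} < x₂. -/
/-! Expanding `det S(x)` along rows `i` and `j` shows that the coefficient of `x²` is minus the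
principal minor of `S` with rows and columns `i, j` deleted; hence `a` is that minor, which is
positive since principal submatrices of a positive definite matrix are positive definite. By
symmetry `S(s_{ij}) = S`, so the quadratic takes the value `det S > 0` at `s_{ij}`, and a
downward parabola that is positive at a point has two real roots enclosing that point. -/

open Matrix MeasureTheory Real

namespace Matrix

variable {R : Type*} [CommRing R]

section

variable {n : Type*} [DecidableEq n] [Fintype n]

theorem det_updateRow_updateRow_add_smul (M : Matrix n n R) {i j : n} (hij : i ≠ j)
    (u e v f : n → R) (x : R) :
    ((M.updateRow i (u + x • e)).updateRow j (v + x • f)).det =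
      ((M.updateRow i u).updateRow j v).det +
        x * (((M.updateRow i e).updateRow j v).det + ((M.updateRow i u).updateRow j f).det) +
        x ^ 2 * ((M.updateRow i e).updateRow j f).det := by
  rw [det_updateRow_add, det_updateRow_smul, updateRow_comm M hij, det_updateRow_add,
    det_updateRow_smul, updateRow_comm M hij, det_updateRow_add, det_updateRow_smul,
    updateRow_comm M hij.symm v, updateRow_comm M hij.symm v,
    updateRow_comm M hij.symm f, updateRow_comm M hij.symm f]
  ring

theorem det_updateRow_updateRow_swap (M : Matrix n n R) {i j : n} (hij : i ≠ j) (u v : n → R) :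
    ((M.updateRow i u).updateRow j v).det = -((M.updateRow i v).updateRow j u).det := by
  have hswap : ((M.updateRow i v).updateRow j u).submatrix (Equiv.swap i j) id =
      (M.updateRow i u).updateRow j v := by
    ext k l
    rcases eq_or_ne k i with rfl | hki
    · simp [hij]
    rcases eq_or_ne k j with rfl | hkj
    · simp [hij]
    · simp [hki, hkj, Equiv.swap_apply_of_ne_of_ne]
  rw [← hswap, det_permute, Equiv.Perm.sign_swap hij]
  simp

end

theorem det_updateRow_single_self {m : ℕ} (A : Matrix (Fin (m + 1)) (Fin (m + 1)) R)
    (i : Fin (m + 1)) :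
    (A.updateRow i (Pi.single i 1)).det = (A.submatrix i.succAbove i.succAbove).det := by
  rw [← adjugate_apply, adjugate_fin_succ_eq_det_submatrix, ← two_mul, pow_mul]
  simp

theorem det_updateRow_single_updateRow_single {m : ℕ} (A : Matrix (Fin (m + 2)) (Fin (m + 2)) R)
    (i : Fin (m + 2)) (j' : Fin (m + 1)) :
    ((A.updateRow i (Pi.single i 1)).updateRow (i.succAbove j')
        (Pi.single (i.succAbove j') 1)).det =
      (A.submatrix (i.succAbove ∘ j'.succAbove) (i.succAbove ∘ j'.succAbove)).det := by
  have hdel : ((A.updateRow (i.succAbove j') (Pi.single (i.succAbove j') 1)).submatrix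
      i.succAbove i.succAbove) =
        (A.submatrix i.succAbove i.succAbove).updateRow j' (Pi.single j' 1) := by
    ext k l
    simp [updateRow_apply, Pi.single_apply]
  rw [updateRow_comm _ (Fin.succAbove_ne i j').symm, det_updateRow_single_self, hdel,
    det_updateRow_single_self, submatrix_submatrix]

end Matrix

theorem updPair_eq_updateRow {N : ℕ} (A : Matrix (Fin N) (Fin N) ℝ) {i j : Fin N}
    (hij : i ≠ j) (x : ℝ) :
    updPair A i j x = (A.updateRow i (Function.update (A i) j 0 + x • Pi.single j 1)).updateRow j
      (Function.update (A j) i 0 + x • Pi.single i 1) := by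
  ext k l
  simp only [updPair, updateRow_apply, Pi.add_apply, Pi.smul_apply, Function.update_apply,
    Pi.single_apply, smul_eq_mul]
  split_ifs <;> simp_all

theorem updPair_self_of_isSymm {N : ℕ} {A : Matrix (Fin N) (Fin N) ℝ} (hA : A.IsSymm)
    (i j : Fin N) : updPair A i j (A i j) = A := by
  ext k l
  simp only [updPair]
  split_ifs with h
  · rcases h with ⟨rfl, rfl⟩ | ⟨rfl, rfl⟩
    · rfl
    · exact hA.apply k l
  · rfl

theorem exists_det_updPair_eq {N : ℕ} (A : Matrix (Fin N) (Fin N) ℝ) {i j : Fin N}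
    (hij : i ≠ j) :
    ∃ b c : ℝ, ∀ x : ℝ, (updPair A i j x).det =
      -((A.updateRow i (Pi.single i 1)).updateRow j (Pi.single j 1)).det * x ^ 2 + b * x + c := by
  refine ⟨((A.updateRow i (Function.update (A i) j 0)).updateRow j (Pi.single i 1)).det +
      ((A.updateRow i (Pi.single j 1)).updateRow j (Function.update (A j) i 0)).det,
    ((A.updateRow i (Function.update (A i) j 0)).updateRow j (Function.update (A j) i 0)).det,
    fun x => ?_⟩
  rw [updPair_eq_updateRow A hij, det_updateRow_updateRow_add_smul A hij,
    det_updateRow_updateRow_swap A hij (Pi.single j 1) (Pi.single i 1)]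
  ring

theorem minor2_pos_of_posDef {N : ℕ} {A : Matrix (Fin (N + 2)) (Fin (N + 2)) ℝ} (hA : A.PosDef)
    (i : Fin (N + 2)) (j' : Fin (N + 1)) : 0 < minor2 A i j' :=
  (hA.submatrix (Fin.succAbove_right_injective.comp Fin.succAbove_right_injective)).det_pos

theorem neg_sq_coeff_eq_of_forall_eq {a b c a' b' c' : ℝ}
    (h : ∀ x : ℝ, -a * x ^ 2 + b * x + c = -a' * x ^ 2 + b' * x + c') : a = a' := by
  have h0 := h 0
  have h1 := h 1
  have h2 := h (-1)
  norm_num at h0 h1 h2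
  linarith

theorem discrim_pos_and_mem_Ioo_roots {a b c s : ℝ} (ha : 0 < a)
    (hs : 0 < -a * s ^ 2 + b * s + c) :
    0 < b ^ 2 + 4 * a * c ∧
      (b - √(b ^ 2 + 4 * a * c)) / (2 * a) < s ∧
      s < (b + √(b ^ 2 + 4 * a * c)) / (2 * a) := by
  have hvertex :
      (2 * a * s - b) ^ 2 + 4 * a * (-a * s ^ 2 + b * s + c) = b ^ 2 + 4 * a * c := by
    ring
  have hdisc : 0 < b ^ 2 + 4 * a * c := by linarith [sq_nonneg (2 * a * s - b), mul_pos ha hs]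
  have hlt : (2 * a * s - b) ^ 2 < √(b ^ 2 + 4 * a * c) ^ 2 := by
    rw [Real.sq_sqrt hdisc.le]
    linarith [mul_pos ha hs]
  obtain ⟨hlo, hhi⟩ := abs_lt_of_sq_lt_sq' hlt (Real.sqrt_nonneg _)
  refine ⟨hdisc, ?_, ?_⟩
  · rw [div_lt_iff₀ (by positivity)]
    linarith
  · rw [lt_div_iff₀ (by positivity)]
    linarith

theorem entry_between_roots_of_posDef_general {N : ℕ}
    (S : Matrix (Fin (N + 2)) (Fin (N + 2)) ℝ) (hpd : S.PosDef)
    (i j : Fin (N + 2)) (hij : i < j) (a b c : ℝ)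
    (hdet : ∀ x : ℝ, (updPair S i j x).det = -a * x ^ 2 + b * x + c) :
    0 < a ∧ 0 < b ^ 2 + 4 * a * c ∧
      (b - Real.sqrt (b ^ 2 + 4 * a * c)) / (2 * a) < S i j ∧
      S i j < (b + Real.sqrt (b ^ 2 + 4 * a * c)) / (2 * a) := by
  obtain ⟨j', rfl⟩ := Fin.exists_succAbove_eq hij.ne'
  obtain ⟨b', c', hexpand⟩ := exists_det_updPair_eq S (Fin.succAbove_ne i j').symm
  have ha : 0 < a := by
    rw [neg_sq_coeff_eq_of_forall_eq fun x => (hdet x).symm.trans (hexpand x),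
      det_updateRow_single_updateRow_single]
    exact minor2_pos_of_posDef hpd i j'
  have hentry : 0 < -a * S i (i.succAbove j') ^ 2 + b * S i (i.succAbove j') + c := by
    rw [← hdet, updPair_self_of_isSymm (isHermitian_iff_isSymm.mp hpd.isHermitian)]
    exact hpd.det_pos
  exact ⟨ha, discrim_pos_and_mem_Ioo_roots ha hentry⟩

/-- for `S` symmetric positive definite with `det (S(x)) = -a x² + b x + c`,
the discriminant `b² + 4ac` is positive, the leading coefficient `a` is positive, and the
actual entry `s_{i,j} = S i j` lies strictly between the two roots. -/
theorem entry_between_roots_of_posDef {N : ℕ}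
    (S : Matrix (Fin (N + 2)) (Fin (N + 2)) ℝ) (hS : S.IsSymm) (hpd : S.PosDef)
    (i j : Fin (N + 2)) (hij : i < j) (a b c : ℝ)
    (hdet : ∀ x : ℝ, (updPair S i j x).det = -a * x ^ 2 + b * x + c) :
    0 < a ∧ 0 < b ^ 2 + 4 * a * c ∧
      (b - Real.sqrt (b ^ 2 + 4 * a * c)) / (2 * a) < S i j ∧
      S i j < (b + Real.sqrt (b ^ 2 + 4 * a * c)) / (2 * a) :=
  entry_between_roots_of_posDef_general S hpd i j hij a b c hdet
end

section
/- Let S be a symmetric N×N real positive definite matrix, and write det(S(x)) = -a x² + b x + c for the determinant as a function of the symmetric (i,j)-entry x. Then S^{i,i} S^{j,j} = b²/4 + a c, where S^{i,i} and S^{j,j} are the diagonal cofactors of S, which are independent of x because deleting row and column i (resp. j) removes both entries at positions (i,j) and (j,i). -/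
open Matrix MeasureTheory Real

section helpers

/-- A positive definite real matrix stays positive definite when restricted along an
injective index map. -/
lemma Matrix.PosDef.submatrix_inj {m n : Type*} [Fintype m] [Fintype n] [DecidableEq n]
    {M : Matrix n n ℝ} (hM : M.PosDef) (e : m → n) (he : Function.Injective e) :
    (M.submatrix e e).PosDef := by
  classical
  rw [posDef_iff_dotProduct_mulVec]
  constructor
  · exact hM.1.submatrix e
  · intro x hx
    set y : n → ℝ := fun i => ∑ k, if e k = i then x k else 0 with hy
    have hyk : ∀ k, y (e k) = x k := by
      intro k
      simp [hy, he.eq_iff]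
    have hsum : ∀ F : n → ℝ, (∑ i, y i * F i) = ∑ k, x k * F (e k) := by
      intro F
      simp only [hy, Finset.sum_mul, ite_mul, zero_mul]
      rw [Finset.sum_comm]
      simp
    have hyne : y ≠ 0 := by
      obtain ⟨k, hk⟩ : ∃ k, x k ≠ 0 := by
        by_contra h; push_neg at h; exact hx (funext h)
      intro h0; apply hk; rw [← hyk k, h0]; rfl
    have key : dotProduct (star x) ((M.submatrix e e) *ᵥ x)
        = dotProduct (star y) (M *ᵥ y) := by
      simp only [star_trivial, dotProduct, mulVec, submatrix_apply]
      have inner : ∀ i, (∑ j', M i j' * y j') = ∑ l, x l * M i (e l) := by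
        intro i
        rw [← hsum fun j' => M i j']
        simp [mul_comm]
      calc (∑ k, x k * ∑ l, M (e k) (e l) * x l)
          = ∑ k, x k * ∑ l, x l * M (e k) (e l) := by
            refine Finset.sum_congr rfl fun k _ => ?_
            rw [Finset.mul_sum, Finset.mul_sum]
            exact Finset.sum_congr rfl fun l _ => by ring
        _ = ∑ i, y i * ∑ l, x l * M i (e l) := (hsum fun i => ∑ l, x l * M i (e l)).symm
        _ = ∑ i, y i * ∑ j', M i j' * y j' := by
            exact Finset.sum_congr rfl fun i _ => by rw [inner i]
    rw [key]
    exact hM.dotProduct_mulVec_pos hyne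

/-- Any injection into `Fin (n+1)` that misses `p` factors through `p.succAbove`
via an equivalence. -/
lemma exists_succAbove_factor {α : Type*} [Fintype α] [DecidableEq α] {n : ℕ}
    (p : Fin (n + 1)) (h : α → Fin (n + 1)) (hcard : Fintype.card α = n)
    (hinj : Function.Injective h) (hp : ∀ z, h z ≠ p) :
    ∃ f : α ≃ Fin n, ∀ z, p.succAbove (f z) = h z := by
  have hs : Function.Injective p.succAbove := Fin.succAbove_right_injective
  let e := Equiv.ofInjective _ hs
  have mem : ∀ z, h z ∈ Set.range p.succAbove := by
    intro z; rw [Fin.range_succAbove]; exact hp z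
  let F : α → Fin n := fun z => e.symm ⟨h z, mem z⟩
  have hF : ∀ z, p.succAbove (F z) = h z := by
    intro z
    have : (e (F z) : Fin (n + 1)) = h z := by
      rw [Equiv.apply_symm_apply]
    simpa [e, Equiv.ofInjective_apply] using this
  have hFinj : Function.Injective F := by
    intro z₁ z₂ hz
    apply hinj
    rw [← hF z₁, ← hF z₂, hz]
  have hbij : Function.Bijective F :=
    (Fintype.bijective_iff_injective_and_card F).mpr ⟨hFinj, by simp [hcard]⟩
  exact ⟨Equiv.ofBijective F hbij, hF⟩

end helpers

/-- for `S` symmetric positive definite with `det (S(x)) = -a x² + b x + c`,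
the diagonal cofactors satisfy `S^{i,i} S^{j,j} = b²/4 + a c`. -/
theorem diag_cofactor_product {N : ℕ}
    (S : Matrix (Fin (N + 2)) (Fin (N + 2)) ℝ) (hS : S.IsSymm) (hpd : S.PosDef)
    (i j : Fin (N + 2)) (hij : i < j) (a b c : ℝ)
    (hdet : ∀ x : ℝ, (updPair S i j x).det = -a * x ^ 2 + b * x + c) :
    cof S i i * cof S j j = b ^ 2 / 4 + a * c := by
  classical
  have hSapp : ∀ k l, S k l = S l k := fun k l => (hS.apply l k)
  have hij' : i ≠ j := ne_of_lt hij
  have hil : i ≠ Fin.last (N + 1) := ne_of_lt (lt_of_lt_of_le hij (Fin.le_last j))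
  set i' : Fin (N + 1) := i.castPred hil with hi'def
  have hji' : j.succAbove i' = i := by
    have h1 : i'.castSucc = i := Fin.castSucc_castPred i hil
    rw [Fin.succAbove_of_castSucc_lt _ _ (by rw [h1]; exact hij), h1]
  set g : Fin N → Fin (N + 2) := j.succAbove ∘ i'.succAbove with hgdef
  have hgj : ∀ k, g k ≠ j := fun k => Fin.succAbove_ne j _
  have hgi : ∀ k, g k ≠ i := by
    intro k h
    rw [← hji'] at h
    exact Fin.succAbove_ne i' k (Fin.succAbove_right_injective (p := j) h)
  have hginj : Function.Injective g :=
    Fin.succAbove_right_injective.comp Fin.succAbove_right_injective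
  set P : Matrix (Fin N) (Fin N) ℝ := S.submatrix g g with hPdef
  have hP : P.PosDef := hpd.submatrix_inj g hginj
  haveI : Invertible P :=
    P.invertibleOfIsUnitDet (isUnit_iff_ne_zero.mpr hP.det_pos.ne')
  -- the big equivalence
  set H : (Fin N ⊕ Fin 2) → Fin (N + 2) := Sum.elim g ![i, j] with hHdef
  have h2mem : ∀ k : Fin 2, ![i, j] k = i ∨ ![i, j] k = j := by
    intro k; fin_cases k <;> simp
  have hHinj : Function.Injective H := by
    rintro (k | k) (l | l) h
    · simp only [hHdef, Sum.elim_inl] at h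
      exact congrArg Sum.inl (hginj h)
    · exfalso
      simp only [hHdef, Sum.elim_inl, Sum.elim_inr] at h
      rcases h2mem l with h' | h' <;> rw [h'] at h
      exacts [hgi _ h, hgj _ h]
    · exfalso
      simp only [hHdef, Sum.elim_inl, Sum.elim_inr] at h
      rcases h2mem k with h' | h' <;> rw [h'] at h
      exacts [hgi _ h.symm, hgj _ h.symm]
    · simp only [hHdef, Sum.elim_inr] at h
      refine congrArg Sum.inr ?_
      fin_cases k <;> fin_cases l <;>
        simp only [Fin.mk_zero, Fin.mk_one, Fin.isValue, Matrix.cons_val_zero,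
          Matrix.cons_val_one, Matrix.head_cons] at h <;>
        first
          | rfl
          | exact absurd h hij'
          | exact absurd h.symm hij'
  have hHbij : Function.Bijective H :=
    (Fintype.bijective_iff_injective_and_card H).mpr ⟨hHinj, by simp⟩
  set e : (Fin N ⊕ Fin 2) ≃ Fin (N + 2) := Equiv.ofBijective H hHbij with hedef
  have hee : ∀ z, e z = H z := fun z => rfl
  -- blocks
  set U : Matrix (Fin N) (Fin 2) ℝ := fun k l => S (g k) (![i, j] l) with hUdef
  set V : Matrix (Fin 2) (Fin N) ℝ := fun l k => S (![i, j] l) (g k) with hVdef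
  have hsub : ∀ x : ℝ, (updPair S i j x).submatrix e e
      = fromBlocks P U V !![S i i, x; x, S j j] := by
    intro x
    ext z w
    rcases z with k | k <;> rcases w with l | l <;>
      simp only [submatrix_apply, hee, hHdef, Sum.elim_inl, Sum.elim_inr,
        fromBlocks_apply₁₁, fromBlocks_apply₁₂, fromBlocks_apply₂₁, fromBlocks_apply₂₂,
        updPair, hPdef, hUdef, hVdef, submatrix_apply]
    · rw [if_neg]; rfl; rintro (⟨h1, _⟩ | ⟨h1, _⟩)
      exacts [hgi _ h1, hgj _ h1]
    · rw [if_neg]; rfl; rintro (⟨h1, _⟩ | ⟨h1, _⟩)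
      exacts [hgi _ h1, hgj _ h1]
    · rw [if_neg]; rfl; rintro (⟨_, h1⟩ | ⟨_, h1⟩)
      exacts [hgj _ h1, hgi _ h1]
    · fin_cases k <;> fin_cases l <;>
        simp only [Fin.mk_zero, Fin.mk_one, Fin.isValue, Matrix.cons_val_zero,
          Matrix.cons_val_one, Matrix.head_cons, Matrix.cons_val', Matrix.empty_val',
          Matrix.cons_val_fin_one]
      all_goals simp [hij', Ne.symm hij', fromBlocks]
  -- block determinant formula
  have hdet2 : ∀ x : ℝ, (updPair S i j x).det
      = P.det * det (!![S i i, x; x, S j j] - V * ⅟P * U) := by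
    intro x
    rw [← det_submatrix_equiv_self e, hsub x, det_fromBlocks₁₁]
  set W : Matrix (Fin 2) (Fin 2) ℝ := V * ⅟P * U with hWdef
  set dP : ℝ := P.det with hdPdef
  have hPsymm : Pᵀ = P := by
    ext k l; simp [hPdef, transpose_apply, hSapp]
  have hQsymm : (⅟P)ᵀ = ⅟P := by
    rw [invOf_eq_nonsing_inv, transpose_nonsing_inv, hPsymm]
  have hUV : Uᵀ = V := by
    ext l k; simp [hUdef, hVdef, transpose_apply, hSapp]; rfl
  have hVU : Vᵀ = U := by rw [← hUV, transpose_transpose]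
  have hWsymm : Wᵀ = W := by
    rw [hWdef, transpose_mul, transpose_mul, hQsymm, hUV, hVU, Matrix.mul_assoc]
  have hW10 : W 1 0 = W 0 1 := congrFun (congrFun hWsymm 0) 1
  have key : ∀ x : ℝ, -a * x ^ 2 + b * x + c
      = dP * ((S i i - W 0 0) * (S j j - W 1 1) - (x - W 0 1) ^ 2) := by
    intro x
    rw [← hdet x, hdet2 x, det_fin_two]
    simp only [Matrix.sub_apply, Matrix.of_apply, Matrix.cons_val', Matrix.cons_val_zero,
      Matrix.cons_val_one, Matrix.head_cons, Matrix.empty_val', Matrix.cons_val_fin_one,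
      Matrix.head_fin_const]
    rw [hW10]
    ring
  -- sign of the diagonal cofactor
  have hsign : ∀ p : Fin (N + 2), ((-1 : ℝ)) ^ ((p : ℕ) + (p : ℕ)) = 1 := by
    intro p; rw [← two_mul, pow_mul]; norm_num
  -- cofactor at i
  obtain ⟨f₁, hf₁⟩ := exists_succAbove_factor i (Sum.elim g fun _ : Fin 1 => j)
    (by simp)
    (by rintro (k | k) (l | l) h <;> simp only [Sum.elim_inl, Sum.elim_inr] at h
        · exact congrArg Sum.inl (hginj h)
        · exact absurd h (hgj k)
        · exact absurd h.symm (hgj l)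
        · exact congrArg Sum.inr (Subsingleton.elim k l))
    (by rintro (k | k)
        · exact hgi k
        · exact Ne.symm hij')
  have hcofi : cof S i i = dP * (S j j - W 1 1) := by
    have h1 : (S.submatrix i.succAbove i.succAbove).submatrix f₁ f₁
        = fromBlocks P (Matrix.of fun k (_ : Fin 1) => S (g k) j) (Matrix.of fun (_ : Fin 1) k => S j (g k))
          (Matrix.of fun (_ _ : Fin 1) => S j j) := by
      ext z w
      rcases z with k | k <;> rcases w with l | l <;>
        simp only [submatrix_apply, hf₁, Sum.elim_inl, Sum.elim_inr, fromBlocks_apply₁₁,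
          fromBlocks_apply₁₂, fromBlocks_apply₂₁, fromBlocks_apply₂₂, hPdef, Matrix.of_apply]
    have hWent : ((Matrix.of fun (_ : Fin 1) k => S j (g k)) * ⅟P *
        (Matrix.of fun k (_ : Fin 1) => S (g k) j)) 0 0 = W 1 1 := by
      simp only [hWdef, Matrix.mul_apply, Matrix.of_apply, hUdef, hVdef, Matrix.cons_val_one,
        Matrix.head_cons]
      rfl
    rw [cof, hsign, one_mul, ← det_submatrix_equiv_self f₁, h1, det_fromBlocks₁₁]
    rw [det_fin_one]
    rw [Matrix.sub_apply, hWent]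
    rfl
  -- cofactor at j
  obtain ⟨f₂, hf₂⟩ := exists_succAbove_factor j (Sum.elim g fun _ : Fin 1 => i)
    (by simp)
    (by rintro (k | k) (l | l) h <;> simp only [Sum.elim_inl, Sum.elim_inr] at h
        · exact congrArg Sum.inl (hginj h)
        · exact absurd h (hgi k)
        · exact absurd h.symm (hgi l)
        · exact congrArg Sum.inr (Subsingleton.elim k l))
    (by rintro (k | k)
        · exact hgj k
        · exact hij')
  have hcofj : cof S j j = dP * (S i i - W 0 0) := by
    have h1 : (S.submatrix j.succAbove j.succAbove).submatrix f₂ f₂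
        = fromBlocks P (Matrix.of fun k (_ : Fin 1) => S (g k) i) (Matrix.of fun (_ : Fin 1) k => S i (g k))
          (Matrix.of fun (_ _ : Fin 1) => S i i) := by
      ext z w
      rcases z with k | k <;> rcases w with l | l <;>
        simp only [submatrix_apply, hf₂, Sum.elim_inl, Sum.elim_inr, fromBlocks_apply₁₁,
          fromBlocks_apply₁₂, fromBlocks_apply₂₁, fromBlocks_apply₂₂, hPdef, Matrix.of_apply]
    have hWent : ((Matrix.of fun (_ : Fin 1) k => S i (g k)) * ⅟P *
        (Matrix.of fun k (_ : Fin 1) => S (g k) i)) 0 0 = W 0 0 := by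
      simp only [hWdef, Matrix.mul_apply, Matrix.of_apply, hUdef, hVdef, Matrix.cons_val_zero]
      rfl
    rw [cof, hsign, one_mul, ← det_submatrix_equiv_self f₂, h1, det_fromBlocks₁₁]
    rw [det_fin_one]
    rw [Matrix.sub_apply, hWent]
    rfl
  -- extract the coefficients
  have e0 := key (W 0 1)
  have e1 := key (W 0 1 + 1)
  have e2 := key (W 0 1 - 1)
  have ha : a = dP := by linear_combination (-(1 : ℝ) / 2) * (e1 + e2 - 2 * e0)
  have hb : b = 2 * dP * W 0 1 := by linear_combination (e1 - e2) / 2 + 2 * W 0 1 * ha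
  have hc : c = dP * ((S i i - W 0 0) * (S j j - W 1 1) - W 0 1 ^ 2) := by
    linear_combination e0 + W 0 1 ^ 2 * ha - W 0 1 * hb
  rw [hcofi, hcofj]
  linear_combination (-(b + 2 * dP * W 0 1) / 4) * hb + (-c) * ha + (-dP) * hc
end

section
/- Let K ≥ 0 and let μ be the Beta(K+1, K+1) probability measure on [0,1]. For 0 < q < 1/2 with μ([0,q]) = α/2, the interval [q, 1-q] satisfies both: (i) μ([q,1-q]) = 1-α, and (ii) the unbiasedness condition ∫_{[0,q]∪[1-q,1]} u dμ(u) = α · ∫_0^1 u dμ(u) = α/2. Moreover, among all pairs (c', c'') with μ([c',c'']) = 1-α, the symmetric choice c' = q, c'' = 1-q is the unique one also satisfying ∫_{[0,c']∪[c'',1]} u dμ(u) = α·∫ u dμ(u). -/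
open Matrix MeasureTheory Real

section BetaThrAuxSec
open Set intervalIntegral

namespace BetaThrAux

noncomputable def betaf (K : ℝ) (u : ℝ) : ℝ :=
  u ^ K * (1 - u) ^ K / ∫ v in (0:ℝ)..1, v ^ K * (1 - v) ^ K

noncomputable def Hf (K x : ℝ) : ℝ := ∫ u in (0:ℝ)..x, betaf K u
noncomputable def Mf (K x : ℝ) : ℝ := ∫ u in (0:ℝ)..x, u * betaf K u

variable {K : ℝ}

lemma g_cont (hK : 0 ≤ K) : Continuous (fun u : ℝ => u ^ K * (1 - u) ^ K) :=
  (Real.continuous_rpow_const hK).mul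
    ((continuous_const.sub continuous_id).rpow_const (fun _ => Or.inr hK))

lemma B_pos (hK : 0 ≤ K) : 0 < ∫ v in (0:ℝ)..1, v ^ K * (1 - v) ^ K := by
  apply intervalIntegral.intervalIntegral_pos_of_pos_on
    ((g_cont hK).intervalIntegrable 0 1)
  · intro x hx
    exact mul_pos (Real.rpow_pos_of_pos hx.1 K) (Real.rpow_pos_of_pos (by linarith [hx.2]) K)
  · norm_num

lemma f_cont (hK : 0 ≤ K) : Continuous (betaf K) := (g_cont hK).div_const _

lemma f_nonneg (hK : 0 ≤ K) {u : ℝ} (h0 : 0 ≤ u) (h1 : u ≤ 1) : 0 ≤ betaf K u :=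
  div_nonneg (mul_nonneg (Real.rpow_nonneg h0 K) (Real.rpow_nonneg (by linarith) K))
    (B_pos hK).le

lemma f_pos (hK : 0 ≤ K) {u : ℝ} (h0 : 0 < u) (h1 : u < 1) : 0 < betaf K u :=
  div_pos (mul_pos (Real.rpow_pos_of_pos h0 K) (Real.rpow_pos_of_pos (by linarith) K))
    (B_pos hK)

lemma f_symm (K : ℝ) (u : ℝ) : betaf K (1 - u) = betaf K u := by
  unfold betaf
  rw [sub_sub_cancel, mul_comm]

lemma f_ii (hK : 0 ≤ K) (a b : ℝ) : IntervalIntegrable (betaf K) volume a b :=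
  (f_cont hK).intervalIntegrable a b

lemma uf_ii (hK : 0 ≤ K) (a b : ℝ) :
    IntervalIntegrable (fun u => u * betaf K u) volume a b :=
  (continuous_id.mul (f_cont hK)).intervalIntegrable a b

lemma Hdiff (hK : 0 ≤ K) (a b : ℝ) : ∫ u in a..b, betaf K u = Hf K b - Hf K a := by
  have := intervalIntegral.integral_add_adjacent_intervals (f_ii hK 0 a) (f_ii hK a b)
  unfold Hf; linarith

lemma Mdiff (hK : 0 ≤ K) (a b : ℝ) :
    ∫ u in a..b, u * betaf K u = Mf K b - Mf K a := by
  have := intervalIntegral.integral_add_adjacent_intervals (uf_ii hK 0 a) (uf_ii hK a b)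
  unfold Mf; linarith

lemma Hsymm (hK : 0 ≤ K) (x : ℝ) : Hf K (1 - x) = Hf K 1 - Hf K x := by
  have h1 : ∫ u in x..1, betaf K (1 - u) = ∫ u in (1-1:ℝ)..(1-x), betaf K u :=
    intervalIntegral.integral_comp_sub_left (betaf K) 1
  simp only [f_symm, sub_self] at h1
  rw [Hdiff hK x 1] at h1
  exact h1.symm

lemma Msymm (hK : 0 ≤ K) (x : ℝ) :
    Mf K (1 - x) = (Hf K 1 - Hf K x) - (Mf K 1 - Mf K x) := by
  have h1 : ∫ u in x..1, (1 - u) * betaf K (1 - u) = ∫ u in (1-1:ℝ)..(1-x), u * betaf K u :=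
    intervalIntegral.integral_comp_sub_left (fun v => v * betaf K v) 1
  simp only [f_symm, sub_self] at h1
  have h2 : ∫ u in x..1, (1 - u) * betaf K u
      = (∫ u in x..1, betaf K u) - ∫ u in x..1, u * betaf K u := by
    rw [← intervalIntegral.integral_sub (f_ii hK x 1) (uf_ii hK x 1)]
    congr 1; ext u; ring
  rw [h2, Hdiff hK x 1, Mdiff hK x 1] at h1
  exact h1.symm

lemma H0 (K : ℝ) : Hf K 0 = 0 := intervalIntegral.integral_same
lemma M0 (K : ℝ) : Mf K 0 = 0 := intervalIntegral.integral_same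

lemma H1 (hK : 0 ≤ K) : Hf K 1 = 1 := by
  unfold Hf betaf
  rw [intervalIntegral.integral_div, div_self (B_pos hK).ne']

lemma M1 (hK : 0 ≤ K) : Mf K 1 = 1 / 2 := by
  have := Msymm hK 0
  rw [H0, M0, sub_zero, H1 hK] at this
  linarith

lemma Hmono (hK : 0 ≤ K) {a b : ℝ} (h0 : 0 ≤ a) (hab : a < b) (h1 : b ≤ 1) :
    Hf K a < Hf K b := by
  have : 0 < ∫ u in a..b, betaf K u := by
    apply intervalIntegral.intervalIntegral_pos_of_pos_on (f_ii hK a b) _ hab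
    intro x hx
    exact f_pos hK (lt_of_le_of_lt h0 hx.1) (lt_of_lt_of_le hx.2 h1)
  have h := Hdiff hK a b; linarith

lemma Hmono' (hK : 0 ≤ K) {a b : ℝ} (h0 : 0 ≤ a) (hab : a ≤ b) (h1 : b ≤ 1) :
    Hf K a ≤ Hf K b := by
  have : 0 ≤ ∫ u in a..b, betaf K u := by
    apply intervalIntegral.integral_nonneg hab
    intro u hu
    exact f_nonneg hK (le_trans h0 hu.1) (le_trans hu.2 h1)
  have h := Hdiff hK a b; linarith

lemma split1 (hK : 0 ≤ K) (r a b : ℝ) :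
    ∫ u in a..b, (r - u) * betaf K u
      = r * (∫ u in a..b, betaf K u) - ∫ u in a..b, u * betaf K u := by
  rw [← intervalIntegral.integral_const_mul,
    ← intervalIntegral.integral_sub ((f_ii hK a b).const_mul r) (uf_ii hK a b)]
  congr 1; ext u; ring

lemma split2 (hK : 0 ≤ K) (r a b : ℝ) :
    ∫ u in a..b, (u - r) * betaf K u
      = (∫ u in a..b, u * betaf K u) - r * (∫ u in a..b, betaf K u) := by
  rw [← intervalIntegral.integral_const_mul,
    ← intervalIntegral.integral_sub (uf_ii hK a b) ((f_ii hK a b).const_mul r)]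
  congr 1; ext u; ring

lemma tail_lt (hK : 0 ≤ K) {α q c' c'' : ℝ} (hα0 : 0 < α) (hα1 : α < 1)
    (hq0 : 0 < q) (hq : q < 1/2) (hHq : Hf K q = α / 2)
    (hc0 : 0 ≤ c') (hcq : c' < q) (hcc : c' ≤ c'') (hc1 : c'' ≤ 1)
    (hmass : Hf K c'' - Hf K c' = 1 - α) :
    Mf K q + (Mf K 1 - Mf K (1 - q)) < Mf K c' + (Mf K 1 - Mf K c'') := by
  have hq1 : q < 1 := by linarith
  have h1q : q < 1 - q := by linarith
  have hH1q : Hf K (1 - q) = 1 - α / 2 := by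
    rw [Hsymm hK q, H1 hK, hHq]
  have hHc' : Hf K c' < α / 2 := by
    have := Hmono hK hc0 hcq hq1.le; linarith
  have hc''lt : c'' < 1 - q := by
    by_contra h
    push_neg at h
    have := Hmono' hK (by linarith : (0:ℝ) ≤ 1 - q) h hc1
    linarith
  have hMcq := Mdiff hK c' q
  have hMc1q := Mdiff hK c'' (1 - q)
  rcases le_or_gt q c'' with hqc | hqc
  · -- q ≤ c''
    have hmeq : ∫ u in c''..(1-q), betaf K u = Hf K q - Hf K c' := by
      rw [Hdiff hK]; linarith
    have hmeq' : ∫ u in c'..q, betaf K u = Hf K q - Hf K c' := by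
      rw [Hdiff hK]
    have cont1 : Continuous fun u : ℝ => (q - u) * betaf K u :=
      Continuous.mul (by continuity) (f_cont hK)
    have step1 : 0 < ∫ u in c'..q, (q - u) * betaf K u := by
      apply intervalIntegral.intervalIntegral_pos_of_pos_on
        (cont1.intervalIntegrable _ _) _ hcq
      intro x hx
      exact mul_pos (by linarith [hx.2]) (f_pos hK (lt_of_le_of_lt hc0 hx.1) (by linarith [hx.2]))
    have step2 : 0 ≤ ∫ u in c''..(1-q), (u - q) * betaf K u := by
      apply intervalIntegral.integral_nonneg hc''lt.le
      intro u hu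
      exact mul_nonneg (by linarith [hu.1]) (f_nonneg hK (by linarith [hu.1]) (by linarith [hu.2]))
    have e1 := split1 hK q c' q
    have e2 := split2 hK q c'' (1 - q)
    rw [hmeq] at e2
    rw [hmeq'] at e1
    linarith
  · -- c'' < q
    have hMq1q := Mdiff hK q (1 - q)
    have hMcc := Mdiff hK c' c''
    have hm1 : ∫ u in q..(1-q), betaf K u = 1 - α := by
      rw [Hdiff hK]; linarith
    have hm2 : ∫ u in c'..c'', betaf K u = 1 - α := by
      rw [Hdiff hK]; linarith
    have cont1 : Continuous fun u : ℝ => (u - q) * betaf K u :=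
      Continuous.mul (by continuity) (f_cont hK)
    have step1 : 0 < ∫ u in q..(1-q), (u - q) * betaf K u := by
      apply intervalIntegral.intervalIntegral_pos_of_pos_on
        (cont1.intervalIntegrable _ _) _ h1q
      intro x hx
      exact mul_pos (by linarith [hx.1]) (f_pos hK (by linarith [hx.1]) (by linarith [hx.2]))
    have step2 : 0 ≤ ∫ u in c'..c'', (q - u) * betaf K u := by
      apply intervalIntegral.integral_nonneg hcc
      intro u hu
      exact mul_nonneg (by linarith [hu.2]) (f_nonneg hK (by linarith [hu.1]) (by linarith [hu.2]))
    have e1 := split2 hK q q (1 - q)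
    have e2 := split1 hK q c' c''
    rw [hm1] at e1
    rw [hm2] at e2
    linarith

end BetaThrAux


end BetaThrAuxSec

/-- for the `Beta(K+1,K+1)` probability measure `μ` on `[0,1]` and `q` the
`α/2`-quantile with `0 < q < 1/2`: `μ([q,1-q]) = 1-α`, the unbiasedness condition
`∫_{[0,q]∪[1-q,1]} u dμ = α·∫ u dμ = α/2` holds, and `(q, 1-q)` is the unique pair
`(c', c'')` with `μ([c',c'']) = 1-α` satisfying the unbiasedness condition. -/
theorem beta_symmetric_thresholds (K α q : ℝ) (hK : 0 ≤ K) (hα : α ∈ Set.Ioo (0:ℝ) 1)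
    (hq0 : 0 < q) (hq : q < 1 / 2)
    (μ : Measure ℝ)
    (hμ : μ = (volume.restrict (Set.Icc (0:ℝ) 1)).withDensity fun u =>
      ENNReal.ofReal (u ^ K * (1 - u) ^ K / ∫ v in (0:ℝ)..1, v ^ K * (1 - v) ^ K))
    (hquant : μ (Set.Icc 0 q) = ENNReal.ofReal (α / 2)) :
    μ (Set.Icc q (1 - q)) = ENNReal.ofReal (1 - α) ∧
    (∫ u in Set.Icc 0 q ∪ Set.Icc (1 - q) 1, u ∂μ) = α * ∫ u, u ∂μ ∧
    α * (∫ u, u ∂μ) = α / 2 ∧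
    (∀ c' c'' : ℝ, 0 ≤ c' → c' ≤ c'' → c'' ≤ 1 →
      μ (Set.Icc c' c'') = ENNReal.ofReal (1 - α) →
      (∫ u in Set.Icc 0 c' ∪ Set.Icc c'' 1, u ∂μ) = α * ∫ u, u ∂μ →
      c' = q ∧ c'' = 1 - q) := by
  obtain ⟨hα0, hα1⟩ := hα
  have hμ' : μ = (volume.restrict (Set.Icc (0:ℝ) 1)).withDensity
      (fun u => ENNReal.ofReal (BetaThrAux.betaf K u)) := hμ
  clear hμ
  have hq1 : q < 1 := by linarith
  -- C1 : measure of subintervals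
  have C1 : ∀ a b : ℝ, 0 ≤ a → a ≤ b → b ≤ 1 →
      μ (Set.Icc a b) = ENNReal.ofReal (∫ u in a..b, BetaThrAux.betaf K u) := by
    intro a b h0 hab h1
    rw [hμ', withDensity_apply _ measurableSet_Icc,
      Measure.restrict_restrict measurableSet_Icc,
      Set.inter_eq_left.mpr (Set.Icc_subset_Icc h0 h1),
      intervalIntegral.integral_of_le hab, ← MeasureTheory.integral_Icc_eq_integral_Ioc,
      MeasureTheory.ofReal_integral_eq_lintegral_ofReal
        ((BetaThrAux.f_cont hK).integrableOn_Icc)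
        ((ae_restrict_iff' measurableSet_Icc).mpr (Filter.Eventually.of_forall
          (fun u hu => BetaThrAux.f_nonneg hK (h0.trans hu.1) (hu.2.trans h1))))]
  -- C2 : set integrals of the identity
  have hfm : Measurable fun u => Real.toNNReal (BetaThrAux.betaf K u) :=
    (continuous_real_toNNReal.comp (BetaThrAux.f_cont hK)).measurable
  have C2 : ∀ S : Set ℝ, MeasurableSet S →
      ∫ u in S, u ∂μ = ∫ u in S ∩ Set.Icc 0 1, u * BetaThrAux.betaf K u := by
    intro S hS
    rw [hμ']
    have hrw : (fun u : ℝ => ENNReal.ofReal (BetaThrAux.betaf K u))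
        = fun u => ((Real.toNNReal (BetaThrAux.betaf K u) : NNReal) : ENNReal) := rfl
    rw [hrw, setIntegral_withDensity_eq_setIntegral_smul hfm _ hS,
      Measure.restrict_restrict hS]
    apply MeasureTheory.setIntegral_congr_fun (hS.inter measurableSet_Icc)
    intro u hu
    simp only [NNReal.smul_def, smul_eq_mul]
    rw [Real.coe_toNNReal _ (BetaThrAux.f_nonneg hK hu.2.1 hu.2.2), mul_comm]
  have hmean : ∫ u, u ∂μ = 1 / 2 := by
    rw [← MeasureTheory.setIntegral_univ, C2 _ MeasurableSet.univ, Set.univ_inter,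
      MeasureTheory.integral_Icc_eq_integral_Ioc,
      ← intervalIntegral.integral_of_le (by norm_num : (0:ℝ) ≤ 1)]
    exact BetaThrAux.M1 hK
  have hUnion : ∀ c1 c2 : ℝ, 0 ≤ c1 → c1 < c2 → c2 ≤ 1 →
      ∫ u in Set.Icc 0 c1 ∪ Set.Icc c2 1, u ∂μ
        = BetaThrAux.Mf K c1 + (BetaThrAux.Mf K 1 - BetaThrAux.Mf K c2) := by
    intro c1 c2 h0 h12 h21
    rw [C2 _ (measurableSet_Icc.union measurableSet_Icc)]
    have hsub : Set.Icc 0 c1 ∪ Set.Icc c2 1 ⊆ Set.Icc (0:ℝ) 1 :=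
      Set.union_subset (Set.Icc_subset_Icc le_rfl (by linarith))
        (Set.Icc_subset_Icc (by linarith) le_rfl)
    rw [Set.inter_eq_left.mpr hsub]
    have hdisj : Disjoint (Set.Icc (0:ℝ) c1) (Set.Icc c2 1) := by
      apply Set.disjoint_left.mpr
      intro u hu1 hu2
      exact absurd (hu1.2.trans_lt h12) (not_lt.mpr hu2.1)
    have hint : Continuous fun u : ℝ => u * BetaThrAux.betaf K u :=
      continuous_id.mul (BetaThrAux.f_cont hK)
    rw [MeasureTheory.setIntegral_union hdisj measurableSet_Icc
      hint.integrableOn_Icc hint.integrableOn_Icc]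
    have e1 : ∫ u in Set.Icc 0 c1, u * BetaThrAux.betaf K u = BetaThrAux.Mf K c1 := by
      rw [MeasureTheory.integral_Icc_eq_integral_Ioc,
        ← intervalIntegral.integral_of_le h0]
      rfl
    have e2 : ∫ u in Set.Icc c2 1, u * BetaThrAux.betaf K u
        = BetaThrAux.Mf K 1 - BetaThrAux.Mf K c2 := by
      rw [MeasureTheory.integral_Icc_eq_integral_Ioc,
        ← intervalIntegral.integral_of_le h21]
      exact BetaThrAux.Mdiff hK c2 1
    rw [e1, e2]
  -- quantile condition in terms of Hf
  have hHq : BetaThrAux.Hf K q = α / 2 := by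
    rw [C1 0 q le_rfl hq0.le hq1.le] at hquant
    have h1 : (0:ℝ) ≤ ∫ u in (0:ℝ)..q, BetaThrAux.betaf K u :=
      intervalIntegral.integral_nonneg hq0.le
        (fun u hu => BetaThrAux.f_nonneg hK hu.1 (hu.2.trans hq1.le))
    rw [ENNReal.ofReal_eq_ofReal_iff h1 (by linarith)] at hquant
    exact hquant
  have hH1q : BetaThrAux.Hf K (1 - q) = 1 - α / 2 := by
    rw [BetaThrAux.Hsymm hK, BetaThrAux.H1 hK, hHq]
  have hsym : BetaThrAux.Mf K q + (BetaThrAux.Mf K 1 - BetaThrAux.Mf K (1 - q)) = α / 2 := by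
    have h := BetaThrAux.Msymm hK q
    rw [BetaThrAux.H1 hK, BetaThrAux.M1 hK, hHq] at h
    linarith [BetaThrAux.M1 hK]
  refine ⟨?_, ?_, ?_, ?_⟩
  · rw [C1 q (1 - q) hq0.le (by linarith) (by linarith)]
    congr 1
    rw [BetaThrAux.Hdiff hK, hHq, hH1q]; ring
  · rw [hUnion q (1 - q) hq0.le (by linarith) (by linarith), hmean]
    linarith
  · rw [hmean]; ring
  · intro c' c'' hc0 hcc hc1 hmassμ htail
    have hmass : BetaThrAux.Hf K c'' - BetaThrAux.Hf K c' = 1 - α := by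
      rw [C1 c' c'' hc0 hcc hc1] at hmassμ
      have h1 : (0:ℝ) ≤ ∫ u in c'..c'', BetaThrAux.betaf K u :=
        intervalIntegral.integral_nonneg hcc
          (fun u hu => BetaThrAux.f_nonneg hK (hc0.trans hu.1) (hu.2.trans hc1))
      rw [ENNReal.ofReal_eq_ofReal_iff h1 (by linarith)] at hmassμ
      rw [← BetaThrAux.Hdiff hK]
      exact hmassμ
    have hcc' : c' < c'' := by
      rcases eq_or_lt_of_le hcc with h | h
      · exfalso; rw [h] at hmass; simp at hmass; linarith
      · exact h
    have htail' : BetaThrAux.Mf K c' + (BetaThrAux.Mf K 1 - BetaThrAux.Mf K c'') = α / 2 := by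
      rw [hUnion c' c'' hc0 hcc' hc1, hmean] at htail
      linarith
    have hc'q : c' = q := by
      rcases lt_trichotomy c' q with h | h | h
      · exfalso
        have := BetaThrAux.tail_lt hK hα0 hα1 hq0 hq hHq hc0 h hcc hc1 hmass
        linarith
      · exact h
      · exfalso
        have hHc' : α / 2 < BetaThrAux.Hf K c' := by
          have := BetaThrAux.Hmono hK hq0.le h (hcc.trans hc1)
          linarith
        have hc''gt : 1 - q < c'' := by
          by_contra hcon
          push_neg at hcon
          have := BetaThrAux.Hmono' hK (hc0.trans hcc) hcon (by linarith)
          linarith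
        have hmassR : BetaThrAux.Hf K (1 - c') - BetaThrAux.Hf K (1 - c'') = 1 - α := by
          rw [BetaThrAux.Hsymm hK, BetaThrAux.Hsymm hK]; linarith
        have htailR : BetaThrAux.Mf K (1 - c'')
            + (BetaThrAux.Mf K 1 - BetaThrAux.Mf K (1 - c')) = α / 2 := by
          have e1 := BetaThrAux.Msymm hK c'
          have e2 := BetaThrAux.Msymm hK c''
          rw [BetaThrAux.H1 hK, BetaThrAux.M1 hK] at e1 e2
          linarith [BetaThrAux.M1 hK]
        have := BetaThrAux.tail_lt hK hα0 hα1 hq0 hq hHq (by linarith : (0:ℝ) ≤ 1 - c'')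
          (by linarith : 1 - c'' < q) (by linarith : 1 - c'' ≤ 1 - c')
          (by linarith : 1 - c' ≤ 1) (by linarith)
        linarith
    have hHc' : BetaThrAux.Hf K c' = α / 2 := by rw [hc'q]; exact hHq
    have hc''q : c'' = 1 - q := by
      rcases lt_trichotomy c'' (1 - q) with h | h | h
      · exfalso
        have := BetaThrAux.Hmono hK (hc0.trans hcc) h (by linarith)
        linarith
      · exact h
      · exfalso
        have := BetaThrAux.Hmono hK (by linarith : (0:ℝ) ≤ 1 - q) h hc1
        linarith
    exact ⟨hc'q, hc''q⟩
end

section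
/- Combining the above: for a symmetric positive definite matrix S, the acceptance region 2q-1 < (a s_{i,j} - b/2)/√(b²/4+ac) < 1-2q of the Neyman-structure test is equivalent to the condition |r^{i,j}| < 1-2q on the sample partial correlation r^{i,j} = -S^{i,j}/√(S^{i,i}S^{j,j}). Hence the UMPU test coincides with a two-sided threshold test on the sample partial correlation. -/
open Matrix MeasureTheory Real

/-!
Replacing the symmetric pair of entries `s_{ij} = s_{ji}` of `S` by `x` is a rank-two update of
`S`, so the matrix determinant lemma writes `det S(x)` as `det S` times a `2 × 2` determinant in
the entries of `S⁻¹`. Comparing coefficients with `-a x² + b x + c` expresses `a`, `b`, `c` through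
`det S` and `S⁻¹ = adj S / det S`, that is through the cofactors, and yields
`-S^{ij} = a s_{ij} - b/2` and `S^{ii} S^{jj} = b²/4 + ac`. The acceptance region of the
Neyman-structure test is therefore literally `|r^{ij}| < 1 - 2q`.
-/

lemma cof_eq_det_mul_inv {N : ℕ} {M : Matrix (Fin (N + 1)) (Fin (N + 1)) ℝ}
    (hM : M.det ≠ 0) (k l : Fin (N + 1)) : cof M k l = M.det * M⁻¹ l k := by
  rw [cof, ← adjugate_fin_succ_eq_det_submatrix, inv_def, Matrix.smul_apply,
    Ring.inverse_eq_inv', smul_eq_mul, mul_inv_cancel_left₀ hM]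

/- In column notation: `U = (x - s_{ij}) [e_i e_j]` and `V = [e_j e_i]ᵀ`. -/
lemma updPair_eq_add_mul {N : ℕ} {S : Matrix (Fin N) (Fin N) ℝ} (hS : S.IsSymm)
    {i j : Fin N} (hij : i ≠ j) (x : ℝ) :
    updPair S i j x = S + (of fun k p => if k = ![i, j] p then x - S i j else 0) *
      of fun p l => if l = ![j, i] p then (1 : ℝ) else 0 := by
  ext k l
  simp only [updPair, Matrix.add_apply, mul_apply, Fin.sum_univ_two, of_apply]
  by_cases hki : k = i <;> by_cases hkj : k = j <;>
    by_cases hli : l = i <;> by_cases hlj : l = j <;>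
    simp_all [hS.apply, Ne.symm hij]

lemma det_updPair {N : ℕ} {S : Matrix (Fin N) (Fin N) ℝ} (hS : S.IsSymm)
    (hdet : S.det ≠ 0) {i j : Fin N} (hij : i ≠ j) (x : ℝ) :
    (updPair S i j x).det = S.det * (1 + 2 * S⁻¹ i j * (x - S i j) +
      (S⁻¹ i j ^ 2 - S⁻¹ i i * S⁻¹ j j) * (x - S i j) ^ 2) := by
  rw [updPair_eq_add_mul hS hij, det_add_mul _ _ (isUnit_iff_ne_zero.mpr hdet), det_fin_two]
  congr 1
  simp only [Matrix.add_apply, mul_apply, of_apply, one_apply, ite_mul, one_mul, zero_mul,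
    mul_ite, mul_zero, Finset.sum_ite_eq', Finset.mem_univ, if_true]
  simp only [cons_val_zero, cons_val_one, cons_val_fin_one, hS.inv.apply j i, zero_ne_one,
    one_ne_zero, if_false]
  ring

lemma quadratic_coeffs_of_forall_eq {a b c D α β γ s : ℝ}
    (h : ∀ x : ℝ, -a * x ^ 2 + b * x + c =
      D * (1 + 2 * α * (x - s) + (α ^ 2 - β * γ) * (x - s) ^ 2)) :
    a = D * (β * γ - α ^ 2) ∧ b = 2 * D * α - 2 * D * (α ^ 2 - β * γ) * s ∧
      c = D * (1 - 2 * α * s + (α ^ 2 - β * γ) * s ^ 2) := by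
  have h0 := h 0
  have h1 := h 1
  have h2 := h (-1)
  refine ⟨?_, ?_, ?_⟩
  · linear_combination (2 * h0 - h1 - h2) / 2
  · linear_combination (h1 - h2) / 2
  · linear_combination h0

section QuadraticDeterminant

variable {N : ℕ} {S : Matrix (Fin (N + 1)) (Fin (N + 1)) ℝ} (hS : S.IsSymm) (hdet : S.det ≠ 0)
  {i j : Fin (N + 1)} (hij : i ≠ j) {a b c : ℝ}
  (hquad : ∀ x : ℝ, (updPair S i j x).det = -a * x ^ 2 + b * x + c)
include hS hdet hij hquad

lemma coeffs_eq_of_det_updPair :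
    a = S.det * (S⁻¹ i i * S⁻¹ j j - S⁻¹ i j ^ 2) ∧
      b = 2 * S.det * S⁻¹ i j - 2 * S.det * (S⁻¹ i j ^ 2 - S⁻¹ i i * S⁻¹ j j) * S i j ∧
      c = S.det * (1 - 2 * S⁻¹ i j * S i j + (S⁻¹ i j ^ 2 - S⁻¹ i i * S⁻¹ j j) * S i j ^ 2) :=
  quadratic_coeffs_of_forall_eq fun x => (hquad x).symm.trans (det_updPair hS hdet hij x)

lemma neg_cof_eq_of_det_updPair : -cof S i j = a * S i j - b / 2 := by
  obtain ⟨ha, hb, -⟩ := coeffs_eq_of_det_updPair hS hdet hij hquad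
  rw [cof_eq_det_mul_inv hdet, hS.inv.apply, ha, hb]
  ring

lemma cof_mul_cof_eq_of_det_updPair : cof S i i * cof S j j = b ^ 2 / 4 + a * c := by
  obtain ⟨ha, hb, hc⟩ := coeffs_eq_of_det_updPair hS hdet hij hquad
  rw [cof_eq_det_mul_inv hdet, cof_eq_det_mul_inv hdet, ha, hb, hc]
  ring

end QuadraticDeterminant

theorem umpu_test_eq_partialCorr_test_general {N : ℕ}
    (S : Matrix (Fin (N + 2)) (Fin (N + 2)) ℝ) (hpd : S.PosDef)
    (i j : Fin (N + 2)) (hij : i < j) (a b c q : ℝ)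
    (hdet : ∀ x : ℝ, (updPair S i j x).det = -a * x ^ 2 + b * x + c) :
    (2 * q - 1 < (a * S i j - b / 2) / Real.sqrt (b ^ 2 / 4 + a * c) ∧
      (a * S i j - b / 2) / Real.sqrt (b ^ 2 / 4 + a * c) < 1 - 2 * q) ↔
    |(-(cof S i j)) / Real.sqrt (cof S i i * cof S j j)| < 1 - 2 * q := by
  have hS : S.IsSymm := isHermitian_iff_isSymm.mp hpd.isHermitian
  have hS₀ : S.det ≠ 0 := hpd.det_pos.ne'
  rw [neg_cof_eq_of_det_updPair hS hS₀ hij.ne hdet,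
    cof_mul_cof_eq_of_det_updPair hS hS₀ hij.ne hdet, abs_lt, neg_sub]

/-- for `S` symmetric positive definite, the Neyman-structure acceptance
region `2q-1 < (a s_{i,j} - b/2)/√(b²/4+ac) < 1-2q` is equivalent to
`|r^{i,j}| < 1-2q` where `r^{i,j} = -S^{i,j}/√(S^{i,i} S^{j,j})` is the sample
partial correlation. -/
theorem umpu_test_eq_partialCorr_test {N : ℕ}
    (S : Matrix (Fin (N + 2)) (Fin (N + 2)) ℝ) (hS : S.IsSymm) (hpd : S.PosDef)
    (i j : Fin (N + 2)) (hij : i < j) (a b c q : ℝ)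
    (hdet : ∀ x : ℝ, (updPair S i j x).det = -a * x ^ 2 + b * x + c)
    (hq0 : 0 < q) (hq : q < 1 / 2) :
    (2 * q - 1 < (a * S i j - b / 2) / Real.sqrt (b ^ 2 / 4 + a * c) ∧
      (a * S i j - b / 2) / Real.sqrt (b ^ 2 / 4 + a * c) < 1 - 2 * q) ↔
    |(-(cof S i j)) / Real.sqrt (cof S i i * cof S j j)| < 1 - 2 * q :=
  umpu_test_eq_partialCorr_test_general S hpd i j hij a b c q hdet
end
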